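/- arXiv:1906.07486 — 8 statements merged into one kernel-verified Lean document; each statement's English description precedes it below -/
import Mathlib

section
/- There is no finitely additive probability measure on the Borel subsets of Ω = ℝ² \ {(0,0)} that is invariant under both h_σ and v_σ. In fact, for any finitely additive Borel probability measure μ on Ω, there exists a Borel set F ⊆ Ω with |μ(h_σ(F)) − μ(F)| ≥ 1/4 or |μ(v_σ(F)) − μ(F)| ≥ 1/4. -/
open Set

noncomputable section

def hmap (σ : ℝ ≃ ℝ) : (ℝ × ℝ) ≃ (ℝ × ℝ) where
  toFun p := (p.1 + σ.symm p.2, p.2)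
  invFun p := (p.1 - σ.symm p.2, p.2)
  left_inv p := by simp
  right_inv p := by simp

def vmap (σ : ℝ ≃ ℝ) : (ℝ × ℝ) ≃ (ℝ × ℝ) where
  toFun p := (p.1, p.2 + σ p.1)
  invFun p := (p.1, p.2 - σ p.1)
  left_inv p := by simp
  right_inv p := by simp

def Xset : Set (ℝ × ℝ) := {p | p ≠ 0 ∧ 0 ≤ p.1 * p.2 ∧ p.1 ≠ 0}
def Yset : Set (ℝ × ℝ) := {p | p ≠ 0 ∧ p.1 * p.2 ≤ 0 ∧ p.2 ≠ 0}
def Omeg : Set (ℝ × ℝ) := {p | p ≠ 0}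

def ratLines (σ : ℝ ≃ ℝ) : Set (Set (ℝ × ℝ)) :=
  {{p : ℝ × ℝ | p.2 = 0}, {p : ℝ × ℝ | p.1 = 0}} ∪
  ((fun w : Function.End (ℝ × ℝ) => w '' {p : ℝ × ℝ | p.2 = 0}) ''
    ↑(Submonoid.closure {(⇑(hmap σ) : Function.End (ℝ × ℝ)), ⇑(vmap σ)} : Submonoid (Function.End (ℝ × ℝ)))) ∪
  ((fun w : Function.End (ℝ × ℝ) => w '' {p : ℝ × ℝ | p.1 = 0}) ''
    ↑(Submonoid.closure {(⇑(hmap σ).symm : Function.End (ℝ × ℝ)), ⇑(vmap σ).symm} : Submonoid (Function.End (ℝ × ℝ))))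

/- ### Auxiliary lemmas -/

section Aux

variable {σ : ℝ ≃ ℝ}

private lemma pr_sig0 (hodd : ∀ x : ℝ, σ (-x) = -σ x) : σ 0 = 0 := by
  have h := hodd 0
  rw [neg_zero] at h
  linarith

private lemma pr_symm0 (hodd : ∀ x : ℝ, σ (-x) = -σ x) : σ.symm 0 = 0 :=
  σ.symm_apply_eq.mpr (pr_sig0 hodd).symm

private lemma pr_symm_neg (hodd : ∀ x : ℝ, σ (-x) = -σ x) (y : ℝ) :
    σ.symm (-y) = -σ.symm y :=
  σ.symm_apply_eq.mpr (by rw [hodd, σ.apply_symm_apply])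

/-- Abbreviations for the four sign conditions. -/
private def PA (s y : ℝ) : Prop := (0 < y ∧ y < s) ∨ (y = 0 ∧ s ≠ 0) ∨ (y < 0 ∧ s < y)
private def PB (s y : ℝ) : Prop := (0 < s ∧ s ≤ y) ∨ (s < 0 ∧ y ≤ s)
private def PC (s y : ℝ) : Prop := (0 < y ∧ s ≤ -y) ∨ (y < 0 ∧ -y ≤ s)
private def PD (s y : ℝ) : Prop := (0 < s ∧ y < -s) ∨ (s < 0 ∧ -s < y) ∨ (s = 0 ∧ y ≠ 0)

private lemma pr_cover (s y : ℝ) (h : s ≠ 0 ∨ y ≠ 0) : PA s y ∨ PB s y ∨ PC s y ∨ PD s y := by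
  unfold PA PB PC PD
  rcases lt_trichotomy y 0 with hy | hy | hy
  · rcases lt_trichotomy s y with hs | hs | hs
    · exact Or.inl (Or.inr (Or.inr ⟨hy, hs⟩))
    · exact Or.inr (Or.inl (Or.inr ⟨by linarith, le_of_eq hs.symm⟩))
    · rcases lt_trichotomy s 0 with h0 | h0 | h0
      · exact Or.inr (Or.inl (Or.inr ⟨h0, le_of_lt hs⟩))
      · exact Or.inr (Or.inr (Or.inr (Or.inr (Or.inr ⟨h0, ne_of_lt hy⟩))))
      · rcases le_or_gt (-y) s with h1 | h1
        · exact Or.inr (Or.inr (Or.inl (Or.inr ⟨hy, h1⟩)))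
        · exact Or.inr (Or.inr (Or.inr (Or.inl ⟨h0, by linarith⟩)))
  · subst hy
    exact Or.inl (Or.inr (Or.inl ⟨rfl, h.resolve_right (by simp)⟩))
  · rcases lt_trichotomy s y with hs | hs | hs
    · rcases lt_trichotomy s 0 with h0 | h0 | h0
      · rcases le_or_gt s (-y) with h1 | h1
        · exact Or.inr (Or.inr (Or.inl (Or.inl ⟨hy, h1⟩)))
        · exact Or.inr (Or.inr (Or.inr (Or.inr (Or.inl ⟨h0, by linarith⟩))))
      · exact Or.inr (Or.inr (Or.inr (Or.inr (Or.inr ⟨h0, ne_of_gt hy⟩))))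
      · exact Or.inr (Or.inl (Or.inl ⟨h0, le_of_lt hs⟩))
    · exact Or.inr (Or.inl (Or.inl ⟨by linarith, le_of_eq hs⟩))
    · exact Or.inl (Or.inl ⟨hy, hs⟩)

private lemma pr_dAB (s y : ℝ) (hA : PA s y) (hB : PB s y) : False := by
  rcases hA with ⟨a1, a2⟩ | ⟨a1, a2⟩ | ⟨a1, a2⟩ <;> rcases hB with ⟨b1, b2⟩ | ⟨b1, b2⟩ <;>
    first | linarith | simp_all

private lemma pr_dAC (s y : ℝ) (hA : PA s y) (hC : PC s y) : False := by
  rcases hA with ⟨a1, a2⟩ | ⟨a1, a2⟩ | ⟨a1, a2⟩ <;> rcases hC with ⟨b1, b2⟩ | ⟨b1, b2⟩ <;>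
    first | linarith | simp_all

private lemma pr_dAD (s y : ℝ) (hA : PA s y) (hD : PD s y) : False := by
  rcases hA with ⟨a1, a2⟩ | ⟨a1, a2⟩ | ⟨a1, a2⟩ <;>
    rcases hD with ⟨b1, b2⟩ | ⟨b1, b2⟩ | ⟨b1, b2⟩ <;>
    first | linarith | simp_all

private lemma pr_dBC (s y : ℝ) (hB : PB s y) (hC : PC s y) : False := by
  rcases hB with ⟨a1, a2⟩ | ⟨a1, a2⟩ <;> rcases hC with ⟨b1, b2⟩ | ⟨b1, b2⟩ <;>
    first | linarith | simp_all

private lemma pr_dBD (s y : ℝ) (hB : PB s y) (hD : PD s y) : False := by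
  rcases hB with ⟨a1, a2⟩ | ⟨a1, a2⟩ <;> rcases hD with ⟨b1, b2⟩ | ⟨b1, b2⟩ | ⟨b1, b2⟩ <;>
    first | linarith | simp_all

private lemma pr_dCD (s y : ℝ) (hC : PC s y) (hD : PD s y) : False := by
  rcases hC with ⟨a1, a2⟩ | ⟨a1, a2⟩ <;> rcases hD with ⟨b1, b2⟩ | ⟨b1, b2⟩ | ⟨b1, b2⟩ <;>
    first | linarith | simp_all

/- ### Membership characterizations -/

private lemma pr_memA (hmono : StrictMono σ) (hodd : ∀ x : ℝ, σ (-x) = -σ x) (p : ℝ × ℝ) :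
    p ∈ ⇑(hmap σ) '' Xset ↔ PA (σ p.1) p.2 := by
  obtain ⟨x, y⟩ := p
  rw [Equiv.image_eq_preimage_symm]
  have hq : (hmap σ).symm (x, y) = (x - σ.symm y, y) := rfl
  simp only [Set.mem_preimage, hq, Xset, Set.mem_setOf_eq, PA]
  set u := σ.symm y with hu
  have hσu : σ u = y := σ.apply_symm_apply y
  constructor
  · rintro ⟨-, hprod, hne⟩
    have hne' : x ≠ u := sub_ne_zero.mp hne
    rcases lt_trichotomy y 0 with hy | hy | hy
    · refine Or.inr (Or.inr ⟨hy, ?_⟩)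
      have hxu : x < u := lt_of_le_of_ne (by nlinarith) hne'
      have := hmono hxu
      rwa [hσu] at this
    · subst hy
      refine Or.inr (Or.inl ⟨rfl, fun hs => ?_⟩)
      have hx0 : x = 0 := σ.injective (by rw [hs, pr_sig0 hodd])
      exact hne' (by rw [hx0, hu, pr_symm0 hodd])
    · refine Or.inl ⟨hy, ?_⟩
      have hux : u < x := lt_of_le_of_ne (by nlinarith) (Ne.symm hne')
      have := hmono hux
      rwa [hσu] at this
  · rintro (⟨hy, hs⟩ | ⟨hy, hs⟩ | ⟨hy, hs⟩)
    · have hux : u < x := hmono.lt_iff_lt.mp (by rw [hσu]; exact hs)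
      refine ⟨?_, mul_nonneg (by linarith) hy.le, sub_ne_zero.mpr hux.ne'⟩
      intro h0
      exact hy.ne' ((Prod.mk_eq_zero.mp h0).2)
    · subst hy
      have hu0 : u = 0 := by rw [hu, pr_symm0 hodd]
      have hx0 : x ≠ 0 := fun h => hs (by rw [h, pr_sig0 hodd])
      refine ⟨?_, by simp, by rw [hu0, sub_zero]; exact hx0⟩
      intro h0
      exact hx0 (by have := (Prod.mk_eq_zero.mp h0).1; rw [hu0, sub_zero] at this; exact this)
    · have hxu : x < u := hmono.lt_iff_lt.mp (by rw [hσu]; exact hs)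
      refine ⟨?_, by nlinarith, sub_ne_zero.mpr hxu.ne⟩
      intro h0
      exact hy.ne ((Prod.mk_eq_zero.mp h0).2)

private lemma pr_memB (hmono : StrictMono σ) (hodd : ∀ x : ℝ, σ (-x) = -σ x) (p : ℝ × ℝ) :
    p ∈ ⇑(vmap σ) '' Xset ↔ PB (σ p.1) p.2 := by
  obtain ⟨x, y⟩ := p
  rw [Equiv.image_eq_preimage_symm]
  have hq : (vmap σ).symm (x, y) = (x, y - σ x) := rfl
  simp only [Set.mem_preimage, hq, Xset, Set.mem_setOf_eq, PB]
  have hpos : 0 < x ↔ 0 < σ x := by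
    constructor
    · intro h; have := hmono h; rwa [pr_sig0 hodd] at this
    · intro h; exact hmono.lt_iff_lt.mp (show σ 0 < σ x by rw [pr_sig0 hodd]; exact h)
  have hneg : x < 0 ↔ σ x < 0 := by
    constructor
    · intro h; have := hmono h; rwa [pr_sig0 hodd] at this
    · intro h; have := hmono.lt_iff_lt.mp (show σ x < σ 0 by rwa [pr_sig0 hodd]); exact this
  constructor
  · rintro ⟨-, hprod, hne⟩
    rcases hne.lt_or_gt with hx | hx
    · exact Or.inr ⟨hneg.mp hx, by nlinarith⟩
    · exact Or.inl ⟨hpos.mp hx, by nlinarith⟩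
  · rintro (⟨hs, hsy⟩ | ⟨hs, hsy⟩)
    · have hx : 0 < x := hpos.mpr hs
      exact ⟨fun h0 => hx.ne' (Prod.mk_eq_zero.mp h0).1,
        mul_nonneg hx.le (by linarith), hx.ne'⟩
    · have hx : x < 0 := hneg.mpr hs
      exact ⟨fun h0 => hx.ne (Prod.mk_eq_zero.mp h0).1,
        by nlinarith, hx.ne⟩

private lemma pr_memC (hmono : StrictMono σ) (hodd : ∀ x : ℝ, σ (-x) = -σ x) (p : ℝ × ℝ) :
    p ∈ ⇑(hmap σ) ⁻¹' Yset ↔ PC (σ p.1) p.2 := by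
  obtain ⟨x, y⟩ := p
  have hq : (hmap σ) (x, y) = (x + σ.symm y, y) := rfl
  simp only [Set.mem_preimage, hq, Yset, Set.mem_setOf_eq, PC]
  set u := σ.symm y with hu
  have hσu : σ u = y := σ.apply_symm_apply y
  have hσnu : σ (-u) = -y := by rw [hodd, hσu]
  constructor
  · rintro ⟨-, hprod, hy⟩
    rcases hy.lt_or_gt with hy' | hy'
    · refine Or.inr ⟨hy', ?_⟩
      have hxu : -u ≤ x := by nlinarith
      have := hmono.monotone hxu
      rwa [hσnu] at this
    · refine Or.inl ⟨hy', ?_⟩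
      have hxu : x ≤ -u := by nlinarith
      have := hmono.monotone hxu
      rwa [hσnu] at this
  · rintro (⟨hy, hs⟩ | ⟨hy, hs⟩)
    · have hxu : x ≤ -u := hmono.le_iff_le.mp (by rw [hσnu]; exact hs)
      exact ⟨fun h0 => hy.ne' (Prod.mk_eq_zero.mp h0).2, by nlinarith, hy.ne'⟩
    · have hxu : -u ≤ x := hmono.le_iff_le.mp (by rw [hσnu]; exact hs)
      exact ⟨fun h0 => hy.ne (Prod.mk_eq_zero.mp h0).2, by nlinarith, hy.ne⟩

private lemma pr_memD (hmono : StrictMono σ) (hodd : ∀ x : ℝ, σ (-x) = -σ x) (p : ℝ × ℝ) :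
    p ∈ ⇑(vmap σ) ⁻¹' Yset ↔ PD (σ p.1) p.2 := by
  obtain ⟨x, y⟩ := p
  have hq : (vmap σ) (x, y) = (x, y + σ x) := rfl
  simp only [Set.mem_preimage, hq, Yset, Set.mem_setOf_eq, PD]
  have hpos : 0 < x ↔ 0 < σ x := by
    constructor
    · intro h; have := hmono h; rwa [pr_sig0 hodd] at this
    · intro h; exact hmono.lt_iff_lt.mp (show σ 0 < σ x by rw [pr_sig0 hodd]; exact h)
  have hneg : x < 0 ↔ σ x < 0 := by
    constructor
    · intro h; have := hmono h; rwa [pr_sig0 hodd] at this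
    · intro h; have := hmono.lt_iff_lt.mp (show σ x < σ 0 by rwa [pr_sig0 hodd]); exact this
  constructor
  · rintro ⟨-, hprod, hne⟩
    rcases lt_trichotomy x 0 with hx | hx | hx
    · have hs : σ x < 0 := hneg.mp hx
      have h1 : 0 ≤ y + σ x := by nlinarith
      exact Or.inr (Or.inl ⟨hs, by cases h1.lt_or_eq with
        | inl h => linarith
        | inr h => exact absurd h.symm hne⟩)
    · subst hx
      have hs : σ (0:ℝ) = 0 := pr_sig0 hodd
      refine Or.inr (Or.inr ⟨hs, ?_⟩)
      intro h
      exact hne (by rw [h, hs, add_zero])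
    · have hs : 0 < σ x := hpos.mp hx
      have h1 : y + σ x ≤ 0 := by nlinarith
      exact Or.inl ⟨hs, by cases h1.lt_or_eq with
        | inl h => linarith
        | inr h => exact absurd h hne⟩
  · rintro (⟨hs, hys⟩ | ⟨hs, hys⟩ | ⟨hs, hys⟩)
    · have hx : 0 < x := hpos.mpr hs
      have h1 : y + σ x < 0 := by linarith
      exact ⟨fun h0 => hx.ne' (Prod.mk_eq_zero.mp h0).1, by nlinarith, h1.ne⟩
    · have hx : x < 0 := hneg.mpr hs
      have h1 : 0 < y + σ x := by linarith
      exact ⟨fun h0 => hx.ne (Prod.mk_eq_zero.mp h0).1, by nlinarith, h1.ne'⟩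
    · have hx : x = 0 := σ.injective (by rw [hs, pr_sig0 hodd])
      have h1 : y + σ x = y := by rw [hs, add_zero]
      refine ⟨?_, by rw [hx]; simp, by rw [h1]; exact hys⟩
      intro h0
      exact hys (by have := (Prod.mk_eq_zero.mp h0).2; rw [h1] at this; exact this)

end Aux

/-- There is no finitely additive Borel probability measure on
Ω = ℝ² \ {0} invariant under h_σ and v_σ; quantitatively, for any finitely
additive Borel probability measure μ there is a Borel set F ⊆ Ω with
|μ(h_σ(F)) − μ(F)| ≥ 1/4 or |μ(v_σ(F)) − μ(F)| ≥ 1/4. -/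
theorem stmt_0 (σ : ℝ ≃ ℝ) (hmono : StrictMono σ) (hodd : ∀ x : ℝ, σ (-x) = -σ x)
    (μ : Set (ℝ × ℝ) → ℝ)
    (hnonneg : ∀ A : Set (ℝ × ℝ), A ⊆ Omeg → MeasurableSet A → 0 ≤ μ A)
    (hprob : μ Omeg = 1)
    (hadd : ∀ A B : Set (ℝ × ℝ), A ⊆ Omeg → B ⊆ Omeg → MeasurableSet A →
      MeasurableSet B → Disjoint A B → μ (A ∪ B) = μ A + μ B) :
    ∃ F : Set (ℝ × ℝ), MeasurableSet F ∧ F ⊆ Omeg ∧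
      (1/4 ≤ |μ (⇑(hmap σ) '' F) - μ F| ∨ 1/4 ≤ |μ (⇑(vmap σ) '' F) - μ F|) := by
  by_contra hcon
  push_neg at hcon
  -- measurability of the basic maps
  have msig : Measurable σ := hmono.monotone.measurable
  have msymm : Measurable σ.symm := by
    have : Monotone σ.symm := fun a b hab => hmono.le_iff_le.mp (by simpa using hab)
    exact this.measurable
  have mh : Measurable ⇑(hmap σ) :=
    (measurable_fst.add (msymm.comp measurable_snd)).prodMk measurable_snd
  have mhs : Measurable ⇑(hmap σ).symm :=
    (measurable_fst.sub (msymm.comp measurable_snd)).prodMk measurable_snd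
  have mv : Measurable ⇑(vmap σ) :=
    measurable_fst.prodMk (measurable_snd.add (msig.comp measurable_fst))
  have mvs : Measurable ⇑(vmap σ).symm :=
    measurable_fst.prodMk (measurable_snd.sub (msig.comp measurable_fst))
  -- measurability of basic sets
  have mzero : MeasurableSet ({p : ℝ × ℝ | p ≠ 0}) := by
    have : ({p : ℝ × ℝ | p ≠ 0}) = ({(0 : ℝ × ℝ)})ᶜ := by ext p; simp
    rw [this]
    exact (measurableSet_singleton 0).compl
  have mX : MeasurableSet Xset := by
    have : Xset = {p : ℝ × ℝ | p ≠ 0} ∩ ({p : ℝ × ℝ | 0 ≤ p.1 * p.2} ∩ {p : ℝ × ℝ | p.1 ≠ 0}) := by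
      ext p; simp [Xset, and_assoc]
    rw [this]
    refine mzero.inter (MeasurableSet.inter ?_ ?_)
    · exact measurableSet_le measurable_const (measurable_fst.mul measurable_snd)
    · have : ({p : ℝ × ℝ | p.1 ≠ 0}) = Prod.fst ⁻¹' ({(0:ℝ)}ᶜ) := by ext p; simp
      rw [this]
      exact measurable_fst (measurableSet_singleton 0).compl
  have mY : MeasurableSet Yset := by
    have : Yset = {p : ℝ × ℝ | p ≠ 0} ∩ ({p : ℝ × ℝ | p.1 * p.2 ≤ 0} ∩ {p : ℝ × ℝ | p.2 ≠ 0}) := by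
      ext p; simp [Yset, and_assoc]
    rw [this]
    refine mzero.inter (MeasurableSet.inter ?_ ?_)
    · exact measurableSet_le (measurable_fst.mul measurable_snd) measurable_const
    · have : ({p : ℝ × ℝ | p.2 ≠ 0}) = Prod.snd ⁻¹' ({(0:ℝ)}ᶜ) := by ext p; simp
      rw [this]
      exact measurable_snd (measurableSet_singleton 0).compl
  -- the four pieces
  set A : Set (ℝ × ℝ) := ⇑(hmap σ) '' Xset with hA
  set B : Set (ℝ × ℝ) := ⇑(vmap σ) '' Xset with hB
  set C : Set (ℝ × ℝ) := ⇑(hmap σ) ⁻¹' Yset with hC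
  set D : Set (ℝ × ℝ) := ⇑(vmap σ) ⁻¹' Yset with hD
  have mA : MeasurableSet A := by
    rw [hA, Equiv.image_eq_preimage_symm]; exact mhs mX
  have mB : MeasurableSet B := by
    rw [hB, Equiv.image_eq_preimage_symm]; exact mvs mX
  have mC : MeasurableSet C := mh mY
  have mD : MeasurableSet D := mv mY
  -- subsets of Omeg
  have hsnd : ∀ p : ℝ × ℝ, p.2 ≠ 0 → p ∈ Omeg := by
    intro p hp h0
    exact hp (by rw [h0]; rfl)
  have hfst : ∀ p : ℝ × ℝ, σ p.1 ≠ 0 → p ∈ Omeg := by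
    intro p hp h0
    apply hp
    have : p.1 = 0 := by rw [h0]; rfl
    rw [this, pr_sig0 hodd]
  have subX : Xset ⊆ Omeg := fun p hp => hp.1
  have subY : Yset ⊆ Omeg := fun p hp => hp.1
  have subA : A ⊆ Omeg := by
    intro p hp
    rcases (pr_memA hmono hodd p).mp hp with ⟨h1, h2⟩ | ⟨h1, h2⟩ | ⟨h1, h2⟩
    · exact hsnd p h1.ne'
    · exact hfst p h2
    · exact hsnd p h1.ne
  have subB : B ⊆ Omeg := by
    intro p hp
    rcases (pr_memB hmono hodd p).mp hp with ⟨h1, h2⟩ | ⟨h1, h2⟩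
    · exact hfst p h1.ne'
    · exact hfst p h1.ne
  have subC : C ⊆ Omeg := by
    intro p hp
    rcases (pr_memC hmono hodd p).mp hp with ⟨h1, h2⟩ | ⟨h1, h2⟩
    · exact hsnd p h1.ne'
    · exact hsnd p h1.ne
  have subD : D ⊆ Omeg := by
    intro p hp
    rcases (pr_memD hmono hodd p).mp hp with ⟨h1, h2⟩ | ⟨h1, h2⟩ | ⟨h1, h2⟩
    · exact hfst p h1.ne'
    · exact hfst p h1.ne
    · exact hsnd p h2
  -- X, Y partition Omeg
  have hXY : Xset ∪ Yset = Omeg := by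
    ext p
    constructor
    · rintro (h | h)
      · exact subX h
      · exact subY h
    · intro hp
      rcases eq_or_ne p.1 0 with hx | hx
      · right
        refine ⟨hp, by rw [hx, zero_mul], ?_⟩
        intro hy
        exact hp (Prod.ext hx hy)
      · rcases le_or_gt 0 (p.1 * p.2) with h | h
        · exact Or.inl ⟨hp, h, hx⟩
        · right
          refine ⟨hp, h.le, ?_⟩
          intro hy
          rw [hy, mul_zero] at h
          exact lt_irrefl 0 h
  have dXY : Disjoint Xset Yset := by
    rw [Set.disjoint_left]
    rintro p ⟨-, h1, h2⟩ ⟨-, h3, h4⟩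
    have : p.1 * p.2 = 0 := le_antisymm h3 h1
    rcases mul_eq_zero.mp this with h | h
    · exact h2 h
    · exact h4 h
  -- A, B, C, D partition Omeg
  have hABCD : ((A ∪ B) ∪ C) ∪ D = Omeg := by
    ext p
    constructor
    · rintro (((h | h) | h) | h)
      · exact subA h
      · exact subB h
      · exact subC h
      · exact subD h
    · intro hp
      have hne : σ p.1 ≠ 0 ∨ p.2 ≠ 0 := by
        by_contra hcontra
        push_neg at hcontra
        obtain ⟨h1, h2⟩ := hcontra
        have hx1 : p.1 = 0 := σ.injective (by rw [h1, pr_sig0 hodd])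
        exact hp (Prod.ext hx1 h2)
      rcases pr_cover (σ p.1) p.2 hne with h | h | h | h
      · exact Or.inl (Or.inl (Or.inl ((pr_memA hmono hodd p).mpr h)))
      · exact Or.inl (Or.inl (Or.inr ((pr_memB hmono hodd p).mpr h)))
      · exact Or.inl (Or.inr ((pr_memC hmono hodd p).mpr h))
      · exact Or.inr ((pr_memD hmono hodd p).mpr h)
  have dAB : Disjoint A B := Set.disjoint_left.mpr fun p hpA hpB =>
    pr_dAB _ _ ((pr_memA hmono hodd p).mp hpA) ((pr_memB hmono hodd p).mp hpB)
  have dAC : Disjoint A C := Set.disjoint_left.mpr fun p hpA hpC =>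
    pr_dAC _ _ ((pr_memA hmono hodd p).mp hpA) ((pr_memC hmono hodd p).mp hpC)
  have dAD : Disjoint A D := Set.disjoint_left.mpr fun p hpA hpD =>
    pr_dAD _ _ ((pr_memA hmono hodd p).mp hpA) ((pr_memD hmono hodd p).mp hpD)
  have dBC : Disjoint B C := Set.disjoint_left.mpr fun p hpB hpC =>
    pr_dBC _ _ ((pr_memB hmono hodd p).mp hpB) ((pr_memC hmono hodd p).mp hpC)
  have dBD : Disjoint B D := Set.disjoint_left.mpr fun p hpB hpD =>
    pr_dBD _ _ ((pr_memB hmono hodd p).mp hpB) ((pr_memD hmono hodd p).mp hpD)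
  have dCD : Disjoint C D := Set.disjoint_left.mpr fun p hpC hpD =>
    pr_dCD _ _ ((pr_memC hmono hodd p).mp hpC) ((pr_memD hmono hodd p).mp hpD)
  -- additivity computations
  have e1 : μ Xset + μ Yset = 1 := by
    have := hadd Xset Yset subX subY mX mY dXY
    rw [hXY, hprob] at this
    linarith
  have e2 : μ A + μ B + μ C + μ D = 1 := by
    have s1 : μ (A ∪ B) = μ A + μ B := hadd A B subA subB mA mB dAB
    have s2 : μ ((A ∪ B) ∪ C) = μ (A ∪ B) + μ C :=
      hadd (A ∪ B) C (Set.union_subset subA subB) subC (mA.union mB) mC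
        (Set.disjoint_union_left.mpr ⟨dAC, dBC⟩)
    have s3 : μ (((A ∪ B) ∪ C) ∪ D) = μ ((A ∪ B) ∪ C) + μ D :=
      hadd ((A ∪ B) ∪ C) D (Set.union_subset (Set.union_subset subA subB) subC) subD
        ((mA.union mB).union mC) mD
        (Set.disjoint_union_left.mpr ⟨Set.disjoint_union_left.mpr ⟨dAD, dBD⟩, dCD⟩)
    rw [hABCD, hprob] at s3
    linarith
  -- invariance-defect bounds from hcon
  obtain ⟨h1, h2⟩ := hcon Xset mX subX
  obtain ⟨h3, -⟩ := hcon C mC subC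
  obtain ⟨-, h4⟩ := hcon D mD subD
  rw [show ⇑(hmap σ) '' C = Yset from Equiv.image_preimage _ _] at h3
  rw [show ⇑(vmap σ) '' D = Yset from Equiv.image_preimage _ _] at h4
  rw [abs_lt] at h1 h2 h3 h4
  rw [← hA] at h1
  rw [← hB] at h2
  linarith [h1.1, h1.2, h2.1, h2.2, h3.1, h3.2, h4.1, h4.2, e1, e2]
end
end

section
/- The sets A = h_σ(X) and B = v_σ(X) are disjoint and their union is X; similarly C = h_σ⁻¹(Y) and D = v_σ⁻¹(Y) are disjoint and their union is Y; and A, B, C, D form a partition of Ω = ℝ² \ {(0,0)}. -/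
open Set

noncomputable section

theorem stmt_1 (σ : ℝ ≃ ℝ) (hmono : StrictMono σ) (hodd : ∀ x : ℝ, σ (-x) = -σ x) :
    let A := ⇑(hmap σ) '' Xset
    let B := ⇑(vmap σ) '' Xset
    let C := ⇑(hmap σ).symm '' Yset
    let D := ⇑(vmap σ).symm '' Yset
    Disjoint A B ∧ A ∪ B = Xset ∧
    Disjoint C D ∧ C ∪ D = Yset ∧
    (Set.univ : Set (Fin 4)).PairwiseDisjoint (fun i => [A, B, C, D].get i) ∧
    A ∪ B ∪ C ∪ D = Omeg := by
  intro A B C D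
  -- basic facts about σ
  have hσ0 : σ 0 = 0 := by have h := hodd 0; rw [neg_zero] at h; linarith
  have hs0 : σ.symm 0 = 0 := σ.injective (by rw [σ.apply_symm_apply, hσ0])
  have hsmono : StrictMono σ.symm := fun a b h =>
    hmono.lt_iff_lt.mp (by simpa using h)
  have hsodd : ∀ x, σ.symm (-x) = -σ.symm x := fun x =>
    σ.injective (by rw [σ.apply_symm_apply, hodd, σ.apply_symm_apply])
  have hpos : ∀ x : ℝ, 0 < x → 0 < σ x := fun x h => by
    have := hmono h; rwa [hσ0] at this
  have hneg : ∀ x : ℝ, x < 0 → σ x < 0 := fun x h => by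
    have := hmono h; rwa [hσ0] at this
  have hspos : ∀ x : ℝ, 0 < x → 0 < σ.symm x := fun x h => by
    have := hsmono h; rwa [hs0] at this
  have hsneg : ∀ x : ℝ, x < 0 → σ.symm x < 0 := fun x h => by
    have := hsmono h; rwa [hs0] at this
  have hmulσ : ∀ x : ℝ, 0 ≤ x * σ x := fun x => by
    rcases lt_trichotomy x 0 with h | h | h
    · nlinarith [hneg x h]
    · simp [h]
    · nlinarith [hpos x h]
  have hmuls : ∀ x : ℝ, 0 ≤ σ.symm x * x := fun x => by
    rcases lt_trichotomy x 0 with h | h | h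
    · nlinarith [hsneg x h]
    · simp [h]
    · nlinarith [hspos x h]
  have hle : ∀ x y : ℝ, σ x ≤ y ↔ x ≤ σ.symm y := fun x y =>
    ⟨fun h => by simpa using hsmono.monotone h,
     fun h => by simpa using hmono.monotone h⟩
  -- membership characterizations
  have hXmem : ∀ p : ℝ × ℝ, p ∈ Xset ↔ 0 ≤ p.1 * p.2 ∧ p.1 ≠ 0 := by
    intro p
    constructor
    · rintro ⟨-, h1, h2⟩; exact ⟨h1, h2⟩
    · rintro ⟨h1, h2⟩
      exact ⟨fun h => h2 (by rw [h]; rfl), h1, h2⟩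
  have hYmem : ∀ p : ℝ × ℝ, p ∈ Yset ↔ p.1 * p.2 ≤ 0 ∧ p.2 ≠ 0 := by
    intro p
    constructor
    · rintro ⟨-, h1, h2⟩; exact ⟨h1, h2⟩
    · rintro ⟨h1, h2⟩
      exact ⟨fun h => h2 (by rw [h]; rfl), h1, h2⟩
  have memA : ∀ p : ℝ × ℝ,
      p ∈ A ↔ 0 ≤ (p.1 - σ.symm p.2) * p.2 ∧ p.1 - σ.symm p.2 ≠ 0 := by
    intro p
    show p ∈ ⇑(hmap σ) '' Xset ↔ _
    rw [Equiv.image_eq_preimage_symm]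
    exact hXmem ((hmap σ).symm p)
  have memB : ∀ p : ℝ × ℝ,
      p ∈ B ↔ 0 ≤ p.1 * (p.2 - σ p.1) ∧ p.1 ≠ 0 := by
    intro p
    show p ∈ ⇑(vmap σ) '' Xset ↔ _
    rw [Equiv.image_eq_preimage_symm]
    exact hXmem ((vmap σ).symm p)
  have memC : ∀ p : ℝ × ℝ,
      p ∈ C ↔ (p.1 + σ.symm p.2) * p.2 ≤ 0 ∧ p.2 ≠ 0 := by
    intro p
    show p ∈ ⇑(hmap σ).symm '' Yset ↔ _
    rw [Equiv.image_eq_preimage_symm]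
    exact hYmem ((hmap σ).symm.symm p)
  have memD : ∀ p : ℝ × ℝ,
      p ∈ D ↔ p.1 * (p.2 + σ p.1) ≤ 0 ∧ p.2 + σ p.1 ≠ 0 := by
    intro p
    show p ∈ ⇑(vmap σ).symm '' Yset ↔ _
    rw [Equiv.image_eq_preimage_symm]
    exact hYmem ((vmap σ).symm.symm p)
  -- Disjointness of A and B
  have hAB : Disjoint A B := by
    rw [Set.disjoint_left]
    intro p hpA hpB
    obtain ⟨ha1, ha2⟩ := (memA p).mp hpA
    obtain ⟨hb1, hb2⟩ := (memB p).mp hpB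
    rcases lt_or_gt_of_ne hb2 with hu | hu
    · -- p.1 < 0
      have h1 : p.2 ≤ σ p.1 := by nlinarith
      have h2 : σ.symm p.2 ≤ p.1 := by
        have := (hle p.1 p.2)
        have h3 : σ.symm p.2 ≤ σ.symm (σ p.1) := hsmono.monotone h1
        simpa using h3
      have h3 : σ.symm p.2 < p.1 := lt_of_le_of_ne h2 (fun h => ha2 (by rw [h]; ring))
      have h4 : p.2 < 0 := lt_of_le_of_lt h1 (hneg _ hu)
      nlinarith
    · -- 0 < p.1
      have h1 : σ p.1 ≤ p.2 := by nlinarith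
      have h2 : p.1 ≤ σ.symm p.2 := (hle _ _).mp h1
      have h3 : p.1 < σ.symm p.2 := lt_of_le_of_ne h2 (fun h => ha2 (by rw [h]; ring))
      have h4 : 0 < p.2 := lt_of_lt_of_le (hpos _ hu) h1
      nlinarith
  -- A ∪ B = X
  have hABX : A ∪ B = Xset := by
    ext p
    rw [Set.mem_union, memA, memB, hXmem]
    constructor
    · rintro (⟨h1, h2⟩ | ⟨h1, h2⟩)
      · refine ⟨by nlinarith [hmuls p.2], fun h0 => ?_⟩
        rw [h0] at h1
        have hz : σ.symm p.2 * p.2 = 0 := le_antisymm (by nlinarith) (hmuls p.2)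
        have hv0 : p.2 = 0 := by
          by_contra hv0
          rcases lt_or_gt_of_ne hv0 with h | h
          · nlinarith [hsneg p.2 h]
          · nlinarith [hspos p.2 h]
        exact h2 (by rw [hv0, hs0, h0]; ring)
      · exact ⟨by nlinarith [hmulσ p.1], h2⟩
    · rintro ⟨h1, h2⟩
      by_cases hb : 0 ≤ p.1 * (p.2 - σ p.1)
      · exact Or.inr ⟨hb, h2⟩
      · push_neg at hb
        left
        rcases lt_or_gt_of_ne h2 with hu | hu
        · -- p.1 < 0, so σ p.1 < p.2
          have hσlt : σ p.1 < p.2 := by nlinarith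
          have h3 : p.1 ≤ σ.symm p.2 := (hle _ _).mp (le_of_lt hσlt)
          have h4 : p.1 ≠ σ.symm p.2 := fun he =>
            absurd (by rw [he, σ.apply_symm_apply]) (ne_of_lt hσlt)
          have h5 : p.2 ≤ 0 := by nlinarith
          exact ⟨by nlinarith [lt_of_le_of_ne h3 h4], by
            intro h; exact h4 (by linarith)⟩
        · -- 0 < p.1, so p.2 < σ p.1
          have hσlt : p.2 < σ p.1 := by nlinarith
          have h3 : σ.symm p.2 ≤ p.1 := by
            have := hsmono.monotone (le_of_lt hσlt); simpa using this
          have h4 : p.1 ≠ σ.symm p.2 := fun he =>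
            absurd (by rw [he, σ.apply_symm_apply]) (ne_of_gt hσlt)
          have h5 : 0 ≤ p.2 := by nlinarith
          exact ⟨by nlinarith [lt_of_le_of_ne h3 (Ne.symm h4)], by
            intro h; exact h4 (by linarith)⟩
  -- Disjointness of C and D
  have hCD : Disjoint C D := by
    rw [Set.disjoint_left]
    intro p hpC hpD
    obtain ⟨hc1, hc2⟩ := (memC p).mp hpC
    obtain ⟨hd1, hd2⟩ := (memD p).mp hpD
    rcases lt_or_gt_of_ne hc2 with hv | hv
    · -- p.2 < 0 : p.1 + σ.symm p.2 ≥ 0, so p.1 ≥ -σ.symm p.2 > 0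
      have h1 : -σ.symm p.2 ≤ p.1 := by nlinarith
      have h2 : -p.2 ≤ σ p.1 := by
        have := hmono.monotone h1
        rwa [hodd, σ.apply_symm_apply] at this
      have h3 : 0 < p.2 + σ p.1 :=
        lt_of_le_of_ne (by linarith) (Ne.symm hd2)
      have h4 : 0 < p.1 := lt_of_lt_of_le (by linarith [hsneg p.2 hv]) h1
      nlinarith
    · -- 0 < p.2 : p.1 + σ.symm p.2 ≤ 0, so p.1 ≤ -σ.symm p.2 < 0
      have h1 : p.1 ≤ -σ.symm p.2 := by nlinarith
      have h2 : σ p.1 ≤ -p.2 := by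
        have := hmono.monotone h1
        rwa [hodd, σ.apply_symm_apply] at this
      have h3 : p.2 + σ p.1 < 0 := lt_of_le_of_ne (by linarith) hd2
      have h4 : p.1 < 0 := lt_of_le_of_lt h1 (by linarith [hspos p.2 hv])
      nlinarith
  -- C ∪ D = Y
  have hCDY : C ∪ D = Yset := by
    ext p
    rw [Set.mem_union, memC, memD, hYmem]
    constructor
    · rintro (⟨h1, h2⟩ | ⟨h1, h2⟩)
      · exact ⟨by nlinarith [hmuls p.2], h2⟩
      · refine ⟨by nlinarith [hmulσ p.1], fun h0 => ?_⟩
        rw [h0, zero_add] at h1 h2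
        have hz : p.1 * σ p.1 = 0 := le_antisymm h1 (hmulσ p.1)
        have hu0 : p.1 = 0 := by
          by_contra hu0
          rcases lt_or_gt_of_ne hu0 with h | h
          · nlinarith [hneg p.1 h]
          · nlinarith [hpos p.1 h]
        exact h2 (by rw [hu0, hσ0])
    · rintro ⟨h1, h2⟩
      by_cases hc : (p.1 + σ.symm p.2) * p.2 ≤ 0
      · exact Or.inl ⟨hc, h2⟩
      · push_neg at hc
        right
        rcases lt_or_gt_of_ne h2 with hv | hv
        · -- p.2 < 0 : p.1 + σ.symm p.2 < 0, so p.1 < -σ.symm p.2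
          have h3 : p.1 < -σ.symm p.2 := by nlinarith
          have h4 : σ p.1 < -p.2 := by
            have := hmono h3
            rwa [hodd, σ.apply_symm_apply] at this
          have h5 : 0 ≤ p.1 := by nlinarith
          exact ⟨by nlinarith, by intro h; linarith⟩
        · -- 0 < p.2 : p.1 + σ.symm p.2 > 0, so -σ.symm p.2 < p.1
          have h3 : -σ.symm p.2 < p.1 := by nlinarith
          have h4 : -p.2 < σ p.1 := by
            have := hmono h3
            rwa [hodd, σ.apply_symm_apply] at this
          have h5 : p.1 ≤ 0 := by nlinarith
          exact ⟨by nlinarith, by intro h; linarith⟩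
  -- X and Y are disjoint
  have hXY : Disjoint Xset Yset := by
    rw [Set.disjoint_left]
    intro p hpX hpY
    obtain ⟨h1, h2⟩ := (hXmem p).mp hpX
    obtain ⟨h3, h4⟩ := (hYmem p).mp hpY
    have : p.1 * p.2 = 0 := le_antisymm h3 h1
    rcases mul_eq_zero.mp this with h | h
    · exact h2 h
    · exact h4 h
  have hAX : A ⊆ Xset := hABX ▸ Set.subset_union_left
  have hBX : B ⊆ Xset := hABX ▸ Set.subset_union_right
  have hCY : C ⊆ Yset := hCDY ▸ Set.subset_union_left
  have hDY : D ⊆ Yset := hCDY ▸ Set.subset_union_right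
  have hAC : Disjoint A C := hXY.mono hAX hCY
  have hAD : Disjoint A D := hXY.mono hAX hDY
  have hBC : Disjoint B C := hXY.mono hBX hCY
  have hBD : Disjoint B D := hXY.mono hBX hDY
  refine ⟨hAB, hABX, hCD, hCDY, ?_, ?_⟩
  · intro i _ j _ hij
    fin_cases i <;> fin_cases j <;>
      first
        | exact absurd rfl hij
        | exact hAB | exact hAB.symm | exact hCD | exact hCD.symm
        | exact hAC | exact hAC.symm | exact hAD | exact hAD.symm
        | exact hBC | exact hBC.symm | exact hBD | exact hBD.symm
  · rw [Set.union_assoc, hCDY]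
    rw [show A ∪ B ∪ Yset = (A ∪ B) ∪ Yset from rfl, hABX]
    ext p
    rw [Set.mem_union, hXmem, hYmem]
    show _ ↔ p ≠ 0
    constructor
    · rintro (⟨-, h⟩ | ⟨-, h⟩) <;> exact fun h0 => h (by rw [h0]; rfl)
    · intro hp
      have hp' : p.1 ≠ 0 ∨ p.2 ≠ 0 := by
        by_contra h
        push_neg at h
        exact hp (Prod.ext_iff.mpr ⟨h.1, h.2⟩)
      by_cases h1 : p.1 = 0
      · exact Or.inr ⟨by rw [h1]; simp, hp'.resolve_left (fun h => h h1)⟩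
      · by_cases h2 : 0 ≤ p.1 * p.2
        · exact Or.inl ⟨h2, h1⟩
        · push_neg at h2
          refine Or.inr ⟨le_of_lt h2, fun hv => ?_⟩
          rw [hv, mul_zero] at h2
          exact lt_irrefl 0 h2
end
end

section
/- The subgroup of homeomorphisms of ℝ² generated by h_σ² and v_σ² is a free group on these two generators. -/
open Set

noncomputable section

/-!
In the coordinates `(σ x, y)` the map `v_σ²` is the linear shear `(a, b) ↦ (a, b + 2a)`, and in
the coordinates `(σ⁻¹ y, -x)` the map `h_σ²` is its inverse. On the punctured plane the shear plays
ping-pong with the sectors between the `b`-axis and the diagonal (diagonal included) and between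
the `b`-axis and the antidiagonal (antidiagonal excluded). These sectors are cut out by sign
comparisons, so they are invariant under applying the odd increasing `σ` to both coordinates;
hence in the common coordinates `(σ x, y)` the four ping-pong sets are the two sectors and their
quarter turns, which are pairwise disjoint. Every map involved fixes the origin, so the ping-pong
lemma is applied off it.
-/

universe u

open Function

def IsPingPong {α : Type*} (o : α) (g : Equiv.Perm α) (X Y : Set α) : Prop :=
  (∀ x, x ≠ o → x ∉ Y → g x ∈ X) ∧ (∀ x, x ≠ o → x ∉ X → g⁻¹ x ∈ Y)

namespace IsPingPong

variable {α : Type*} {o : α} {g s : Equiv.Perm α} {X Y : Set α}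

theorem inv (h : IsPingPong o g X Y) : IsPingPong o g⁻¹ Y X :=
  ⟨h.2, by simpa only [inv_inv] using h.1⟩

theorem conj (h : IsPingPong o s X Y) (hg : IsFixedPt g o) :
    IsPingPong o (g⁻¹ * s * g) (g ⁻¹' X) (g ⁻¹' Y) := by
  have hne : ∀ x, x ≠ o → g x ≠ o := fun x hx => (g.injective.ne_iff' hg).2 hx
  refine ⟨fun x hx hxY => ?_, fun x hx hxX => ?_⟩
  · simpa using h.1 (g x) (hne x hx) hxY
  · simpa [mul_assoc] using h.2 (g x) (hne x hx) hxX

end IsPingPong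

theorem FreeGroup.injective_lift_of_ping_pong_of_isFixedPt {ι α : Type u} [Nontrivial ι]
    (a : ι → Equiv.Perm α) (o : α) (ho : ∀ i, IsFixedPt (a i) o) (X Y : ι → Set α)
    (hXne : ∀ i, (X i \ {o}).Nonempty) (hXdisj : Pairwise (Disjoint on X))
    (hYdisj : Pairwise (Disjoint on Y)) (hXY : ∀ i j, Disjoint (X i) (Y j))
    (ha : ∀ i, IsPingPong o (a i) (X i) (Y i)) :
    Injective (FreeGroup.lift a) := by
  classical
  have hne : ∀ i x, a i x ≠ o ↔ x ≠ o := fun i x => (a i).injective.ne_iff' (ho i)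
  let b : ι → Equiv.Perm {x // x ≠ o} := fun i => (a i).subtypePerm (hne i)
  have hab : FreeGroup.lift a = Equiv.Perm.ofSubtype.comp (FreeGroup.lift b) :=
    FreeGroup.ext_hom _ _ fun i => by
      simp only [MonoidHom.comp_apply, FreeGroup.lift_apply_of, b]
      exact (Equiv.Perm.ofSubtype_subtypePerm (hne i) <| by rintro x hx rfl; exact hx (ho i)).symm
  rw [hab, MonoidHom.coe_comp]
  refine Equiv.Perm.ofSubtype_injective.comp <| FreeGroup.injective_lift_of_ping_pong b
    (α := {x // x ≠ o}) (fun i => Subtype.val ⁻¹' X i) (fun i => Subtype.val ⁻¹' Y i)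
    (fun i => ?_) (fun i j hij => (hXdisj hij).preimage _)
    (fun i j hij => (hYdisj hij).preimage _) (fun i j => (hXY i j).preimage _) ?_ ?_
  · obtain ⟨x, hx, hxo⟩ := hXne i
    exact ⟨⟨x, hxo⟩, hx⟩
  · rintro i _ ⟨x, hx, rfl⟩
    exact (ha i).1 x x.2 hx
  · rintro i _ ⟨x, hx, rfl⟩
    exact (ha i).2 x x.2 hx

def attractingCone : Set (ℝ × ℝ) :=
  {p | (0 < p.1 ∧ p.1 ≤ p.2) ∨ (p.1 < 0 ∧ p.2 ≤ p.1) ∨ (p.1 = 0 ∧ 0 < p.2)}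

def repellingCone : Set (ℝ × ℝ) :=
  {p | (0 < p.1 ∧ p.2 < -p.1) ∨ (p.1 < 0 ∧ -p.1 < p.2) ∨ (p.1 = 0 ∧ p.2 < 0)}

def shear (k : ℝ) : Equiv.Perm (ℝ × ℝ) where
  toFun p := (p.1, p.2 + k * p.1)
  invFun p := (p.1, p.2 - k * p.1)
  left_inv p := by simp
  right_inv p := by simp

theorem isPingPong_shear {k : ℝ} (hk : 2 ≤ k) :
    IsPingPong 0 (shear k) attractingCone repellingCone := by
  constructor
  · rintro ⟨a, b⟩ hp hpY
    simp only [repellingCone, attractingCone, mem_ofPred_eq, not_or, not_and, not_lt, shear,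
      Equiv.coe_fn_mk, ne_eq, Prod.mk_eq_zero] at hp hpY ⊢
    rcases lt_trichotomy a 0 with ha | rfl | ha
    · exact .inr <| .inl ⟨ha, by nlinarith [hpY.2.1 ha]⟩
    · exact .inr <| .inr ⟨rfl, by simpa using (hpY.2.2 rfl).lt_of_ne' (hp rfl)⟩
    · exact .inl ⟨ha, by nlinarith [hpY.1 ha]⟩
  · rintro ⟨a, b⟩ hp hpX
    simp only [repellingCone, attractingCone, mem_ofPred_eq, not_or, not_and, not_le, not_lt, shear,
      Equiv.Perm.inv_def, Equiv.coe_fn_symm_mk, ne_eq, Prod.mk_eq_zero] at hp hpX ⊢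
    rcases lt_trichotomy a 0 with ha | rfl | ha
    · exact .inr <| .inl ⟨ha, by nlinarith [hpX.2.1 ha]⟩
    · exact .inr <| .inr ⟨rfl, by simpa using (hpX.2.2 rfl).lt_of_ne (hp rfl)⟩
    · exact .inl ⟨ha, by nlinarith [hpX.1 ha]⟩

section Invariance

variable {f : ℝ → ℝ} (hf : StrictMono f)
include hf

theorem StrictMono.pos_iff_of_map_zero (h0 : f 0 = 0) (x : ℝ) : 0 < f x ↔ 0 < x := by
  simpa [h0] using hf.lt_iff_lt (a := 0) (b := x)

theorem StrictMono.neg_iff_of_map_zero (h0 : f 0 = 0) (x : ℝ) : f x < 0 ↔ x < 0 := by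
  simpa [h0] using hf.lt_iff_lt (a := x) (b := 0)

theorem map_mem_attractingCone_iff (h0 : f 0 = 0) (p : ℝ × ℝ) :
    Prod.map f f p ∈ attractingCone ↔ p ∈ attractingCone := by
  simp only [attractingCone, mem_ofPred_eq, Prod.map_fst, Prod.map_snd,
    hf.pos_iff_of_map_zero h0, hf.neg_iff_of_map_zero h0, hf.injective.eq_iff' h0, hf.le_iff_le]

theorem map_mem_repellingCone_iff (hodd : f.Odd) (p : ℝ × ℝ) :
    Prod.map f f p ∈ repellingCone ↔ p ∈ repellingCone := by
  simp only [repellingCone, mem_ofPred_eq, Prod.map_fst, Prod.map_snd,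
    hf.pos_iff_of_map_zero hodd.map_zero, hf.neg_iff_of_map_zero hodd.map_zero,
    hf.injective.eq_iff' hodd.map_zero, ← hodd.eq, hf.lt_iff_lt]

end Invariance

theorem disjoint_attractingCone_repellingCone : Disjoint attractingCone repellingCone :=
  disjoint_left.2 fun _ => by
    simp only [attractingCone, repellingCone, mem_ofPred_eq]; grind

def rotate (p : ℝ × ℝ) : ℝ × ℝ := (p.2, -p.1)

theorem disjoint_rotate_repellingCone_attractingCone :
    Disjoint (rotate ⁻¹' repellingCone) attractingCone :=
  disjoint_left.2 fun _ => by
    simp only [attractingCone, repellingCone, rotate, mem_preimage, mem_ofPred_eq]; grind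

theorem disjoint_rotate_attractingCone_repellingCone :
    Disjoint (rotate ⁻¹' attractingCone) repellingCone :=
  disjoint_left.2 fun _ => by
    simp only [attractingCone, repellingCone, rotate, mem_preimage, mem_ofPred_eq]; grind

theorem disjoint_rotate_repellingCone_repellingCone :
    Disjoint (rotate ⁻¹' repellingCone) repellingCone :=
  disjoint_left.2 fun _ => by
    simp only [repellingCone, rotate, mem_preimage, mem_ofPred_eq]; grind

theorem disjoint_attractingCone_rotate_attractingCone :
    Disjoint attractingCone (rotate ⁻¹' attractingCone) :=
  disjoint_left.2 fun _ => by
    simp only [attractingCone, rotate, mem_preimage, mem_ofPred_eq]; grind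

def vCoord (σ : ℝ ≃ ℝ) : Equiv.Perm (ℝ × ℝ) := σ.prodCongr (Equiv.refl ℝ)

def hCoord (σ : ℝ ≃ ℝ) : Equiv.Perm (ℝ × ℝ) :=
  (Equiv.prodComm ℝ ℝ).trans (σ.symm.prodCongr (Equiv.neg ℝ))

theorem vmap_sq_eq (σ : ℝ ≃ ℝ) :
    (vmap σ : Equiv.Perm (ℝ × ℝ)) ^ 2 = (vCoord σ)⁻¹ * shear 2 * vCoord σ := by
  ext p <;> simp [vmap, vCoord, shear, sq]; ring

theorem hmap_sq_eq (σ : ℝ ≃ ℝ) :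
    (hmap σ : Equiv.Perm (ℝ × ℝ)) ^ 2 = (hCoord σ)⁻¹ * (shear 2)⁻¹ * hCoord σ := by
  ext p <;> simp [hmap, hCoord, shear, sq]; ring

theorem preimage_hCoord_eq {σ : ℝ ≃ ℝ} (hodd : Function.Odd σ) {C : Set (ℝ × ℝ)}
    (hC : ∀ p, Prod.map σ σ p ∈ C ↔ p ∈ C) :
    hCoord σ ⁻¹' C = vCoord σ ⁻¹' (rotate ⁻¹' C) := by
  ext p
  rw [mem_preimage, ← hC]
  obtain ⟨x, y⟩ := p
  simp [hCoord, vCoord, rotate, hodd.eq]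

section Generators

variable {σ : ℝ ≃ ℝ}

theorem isPingPong_vmap_sq (h0 : σ 0 = 0) :
    IsPingPong 0 ((vmap σ : Equiv.Perm (ℝ × ℝ)) ^ 2)
      (vCoord σ ⁻¹' attractingCone) (vCoord σ ⁻¹' repellingCone) := by
  rw [vmap_sq_eq]
  exact (isPingPong_shear le_rfl).conj (by simp [IsFixedPt, vCoord, Prod.ext_iff, h0])

theorem isPingPong_hmap_sq (hmono : StrictMono σ) (hodd : Function.Odd σ) :
    IsPingPong 0 ((hmap σ : Equiv.Perm (ℝ × ℝ)) ^ 2)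
      (vCoord σ ⁻¹' (rotate ⁻¹' repellingCone)) (vCoord σ ⁻¹' (rotate ⁻¹' attractingCone)) := by
  rw [hmap_sq_eq, ← preimage_hCoord_eq hodd (map_mem_repellingCone_iff hmono hodd),
    ← preimage_hCoord_eq hodd (map_mem_attractingCone_iff hmono hodd.map_zero)]
  refine (isPingPong_shear le_rfl).inv.conj ?_
  simp [IsFixedPt, hCoord, Prod.ext_iff, σ.symm_apply_eq.2 hodd.map_zero.symm]

end Generators

/-- The group generated by h_σ² and v_σ² is free on these two generators. -/
theorem stmt_3 (σ : ℝ ≃ ℝ) (hmono : StrictMono σ) (hodd : ∀ x : ℝ, σ (-x) = -σ x) :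
    Function.Injective
      ⇑(FreeGroup.lift (fun b : Bool =>
        if b then ((hmap σ : Equiv.Perm (ℝ × ℝ)) ^ 2) else ((vmap σ : Equiv.Perm (ℝ × ℝ)) ^ 2))) := by
  have hσ0 : σ 0 = 0 := Function.Odd.map_zero hodd
  refine FreeGroup.injective_lift_of_ping_pong_of_isFixedPt _ 0 ?_
    (fun i => bif i then vCoord σ ⁻¹' (rotate ⁻¹' repellingCone) else vCoord σ ⁻¹' attractingCone)
    (fun i => bif i then vCoord σ ⁻¹' (rotate ⁻¹' attractingCone) else vCoord σ ⁻¹' repellingCone)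
    ?_ (pairwise_disjoint_on_bool.2 <| disjoint_rotate_repellingCone_attractingCone.preimage _)
    (pairwise_disjoint_on_bool.2 <| disjoint_rotate_attractingCone_repellingCone.preimage _) ?_ ?_
  · rintro (_ | _)
    · exact .perm_pow (by simp [IsFixedPt, vmap, hσ0]) 2
    · exact .perm_pow (by simp [IsFixedPt, hmap, σ.symm_apply_eq.2 hσ0.symm]) 2
  · rintro (_ | _)
    · exact ⟨(0, 1), by simp [vCoord, attractingCone, hσ0]⟩
    · exact ⟨(1, 0), by
        simp [vCoord, rotate, repellingCone, (hmono.pos_iff_of_map_zero hσ0 1).2 one_pos]⟩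
  · rintro (_ | _) (_ | _)
    exacts [disjoint_attractingCone_repellingCone.preimage _,
      disjoint_attractingCone_rotate_attractingCone.preimage _,
      disjoint_rotate_repellingCone_repellingCone.preimage _,
      (disjoint_attractingCone_repellingCone.symm.preimage _).preimage _]
  · rintro (_ | _)
    exacts [isPingPong_vmap_sq hσ0, isPingPong_hmap_sq hmono hodd]
end
end

section
/- For every nonzero integer k, v_σ^{2k} maps P into Q, and for every nonzero integer l, h_σ^{2l} maps Q into P, where P = h_σ⁻¹(Y) ∪ h_σ(X) and Q = v_σ(X) ∪ v_σ⁻¹(Y). -/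
open Set

noncomputable section

def Pset (σ : ℝ ≃ ℝ) : Set (ℝ × ℝ) := ⇑(hmap σ).symm '' Yset ∪ ⇑(hmap σ) '' Xset
def Qset (σ : ℝ ≃ ℝ) : Set (ℝ × ℝ) := ⇑(vmap σ) '' Xset ∪ ⇑(vmap σ).symm '' Yset

/-!
Write `u = σ⁻¹ y`. Since `σ⁻¹` is odd and increasing, `y` and `u` have the same sign, and
unwinding the definitions gives `P = {(x, y) | |u| ≤ |x|, u ≠ x}`, or equivalently
`P = {(x, y) | |y| ≤ |σ x|, y ≠ σ x}`; dually `Q = {(x, y) | |σ x| ≤ |y|, y ≠ -σ x}`.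
As `v_σ^n (x, y) = (x, y + n σ x)` and `h_σ^n (x, y) = (x + n σ⁻¹ y, y)`, both inclusions reduce
to one inequality: if `|n| ≥ 2`, `|b| ≤ |s|` and `b ≠ s`, then `|s| ≤ |b + n s|` by the triangle
inequality, and `b + n s = -s` would force `n = -2` and `b = s`.
-/

section Arith

variable {R : Type*} [CommRing R] [LinearOrder R] [IsStrictOrderedRing R]

lemma abs_le_abs_and_ne_iff (a u : R) :
    |u| ≤ |a| ∧ a ≠ u ↔ ((a + u) * u ≤ 0 ∧ u ≠ 0) ∨ (0 ≤ (a - u) * u ∧ a - u ≠ 0) := by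
  rw [mul_nonpos_iff, mul_nonneg_iff, sub_ne_zero]
  rcases abs_cases u with ⟨hu, _⟩ | ⟨hu, _⟩ <;> rcases abs_cases a with ⟨ha, _⟩ | ⟨ha, _⟩ <;>
    rw [hu, ha] <;> grind

lemma abs_le_abs_and_ne_neg_iff (c s : R) :
    |s| ≤ |c| ∧ c ≠ -s ↔ (0 ≤ s * (c - s) ∧ s ≠ 0) ∨ (s * (c + s) ≤ 0 ∧ c + s ≠ 0) := by
  rw [mul_nonpos_iff, mul_nonneg_iff, ← sub_neg_eq_add, sub_ne_zero]
  rcases abs_cases s with ⟨hs, _⟩ | ⟨hs, _⟩ <;> rcases abs_cases c with ⟨hc, _⟩ | ⟨hc, _⟩ <;>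
    rw [hs, hc] <;> grind

lemma abs_le_abs_add_mul_and_ne_neg {b s n : R} (hn : 2 ≤ |n|) (hbs : |b| ≤ |s|) (hne : b ≠ s) :
    |s| ≤ |b + n * s| ∧ b + n * s ≠ -s := by
  refine ⟨?_, fun h => ?_⟩
  · calc |s| = 2 * |s| - |s| := by ring
      _ ≤ |n * s| - |b| := by rw [abs_mul]; gcongr
      _ ≤ |b + n * s| := by
        have := abs_sub_abs_le_abs_sub (n * s) (-b)
        rwa [abs_neg, sub_neg_eq_add, add_comm] at this
  · have hs : s ≠ 0 := by rintro rfl; simp_all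
    have hb : b = -(n + 1) * s := by linear_combination h
    have hn1 : |n + 1| ≤ 1 := by
      rw [hb, abs_mul, abs_neg] at hbs
      exact (mul_le_iff_le_one_left (abs_pos.2 hs)).1 hbs
    have hn2 : n = -2 := by
      rcases abs_le.1 hn1 with ⟨_, _⟩
      rcases le_abs'.1 hn with _ | _ <;> linarith
    exact hne (by rw [hb, hn2]; ring)

end Arith

lemma two_le_abs_intCast_two_mul {k : ℤ} (hk : k ≠ 0) : 2 ≤ |((2 * k : ℤ) : ℝ)| := by
  have : (1 : ℝ) ≤ |(k : ℝ)| := by exact_mod_cast Int.one_le_abs hk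
  push_cast
  rw [abs_mul, abs_two]
  linarith

section OrderedMaps

variable {α β : Type*}

lemma StrictMono.apply_nonneg_iff [LinearOrder α] [Zero α] [Preorder β] [Zero β] {f : α → β}
    (hf : StrictMono f) (h0 : f 0 = 0) (x : α) : 0 ≤ f x ↔ 0 ≤ x := by
  simpa only [h0] using hf.le_iff_le (a := 0) (b := x)

lemma StrictMono.apply_nonpos_iff [LinearOrder α] [Zero α] [Preorder β] [Zero β] {f : α → β}
    (hf : StrictMono f) (h0 : f 0 = 0) (x : α) : f x ≤ 0 ↔ x ≤ 0 := by
  simpa only [h0] using hf.le_iff_le (a := x) (b := 0)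

lemma StrictMono.equiv_symm [LinearOrder α] [Preorder β] {e : α ≃ β} (he : StrictMono e) :
    StrictMono e.symm :=
  fun x y h => he.lt_iff_lt.1 (by simpa only [Equiv.apply_symm_apply] using h)

lemma Function.Odd.equiv_symm [Neg α] [Neg β] {e : α ≃ β} (he : Function.Odd e) :
    Function.Odd e.symm :=
  fun x => e.symm_apply_eq.2 (by rw [he, Equiv.apply_symm_apply])

variable [AddCommGroup α] [LinearOrder α] [IsOrderedAddMonoid α]
  [AddCommGroup β] [LinearOrder β] [IsOrderedAddMonoid β] {f : α → β}

lemma StrictMono.abs_apply_of_odd (hf : StrictMono f) (hodd : Function.Odd f) (x : α) :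
    |f x| = f |x| := by
  rcases le_or_gt 0 x with hx | hx
  · rw [abs_of_nonneg hx, abs_of_nonneg ((hf.apply_nonneg_iff hodd.map_zero x).2 hx)]
  · rw [abs_of_neg hx, abs_of_neg (hodd.map_zero ▸ hf hx), hodd]

lemma StrictMono.abs_apply_le_abs_apply_iff_of_odd (hf : StrictMono f) (hodd : Function.Odd f)
    (x y : α) : |f x| ≤ |f y| ↔ |x| ≤ |y| := by
  rw [hf.abs_apply_of_odd hodd, hf.abs_apply_of_odd hodd, hf.le_iff_le]

end OrderedMaps

lemma mem_Xset_iff (p : ℝ × ℝ) : p ∈ Xset ↔ 0 ≤ p.1 * p.2 ∧ p.1 ≠ 0 :=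
  ⟨fun h => h.2, fun h => ⟨fun h0 => h.2 (by rw [h0]; rfl), h⟩⟩

lemma mem_Yset_iff (p : ℝ × ℝ) : p ∈ Yset ↔ p.1 * p.2 ≤ 0 ∧ p.2 ≠ 0 :=
  ⟨fun h => h.2, fun h => ⟨fun h0 => h.2 (by rw [h0]; rfl), h⟩⟩

lemma hmap_apply (σ : ℝ ≃ ℝ) (p : ℝ × ℝ) : hmap σ p = (p.1 + σ.symm p.2, p.2) := rfl

lemma hmap_symm_apply (σ : ℝ ≃ ℝ) (p : ℝ × ℝ) : (hmap σ).symm p = (p.1 - σ.symm p.2, p.2) := rfl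

lemma vmap_apply (σ : ℝ ≃ ℝ) (p : ℝ × ℝ) : vmap σ p = (p.1, p.2 + σ p.1) := rfl

lemma vmap_symm_apply (σ : ℝ ≃ ℝ) (p : ℝ × ℝ) : (vmap σ).symm p = (p.1, p.2 - σ p.1) := rfl

lemma hmap_zpow_apply (σ : ℝ ≃ ℝ) (n : ℤ) (p : ℝ × ℝ) :
    ((hmap σ : Equiv.Perm (ℝ × ℝ)) ^ n) p = (p.1 + n * σ.symm p.2, p.2) := by
  induction n using Int.induction_on generalizing p with
  | zero => simp
  | succ k ih =>
    rw [zpow_add_one, Equiv.Perm.mul_apply, ih, hmap_apply]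
    exact Prod.ext (by push_cast; ring) rfl
  | pred k ih =>
    rw [zpow_sub_one, Equiv.Perm.mul_apply, ih, Equiv.Perm.inv_def, hmap_symm_apply]
    exact Prod.ext (by push_cast; ring) rfl

lemma vmap_zpow_apply (σ : ℝ ≃ ℝ) (n : ℤ) (p : ℝ × ℝ) :
    ((vmap σ : Equiv.Perm (ℝ × ℝ)) ^ n) p = (p.1, p.2 + n * σ p.1) := by
  induction n using Int.induction_on generalizing p with
  | zero => simp
  | succ k ih =>
    rw [zpow_add_one, Equiv.Perm.mul_apply, ih, vmap_apply]
    exact Prod.ext rfl (by push_cast; ring)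
  | pred k ih =>
    rw [zpow_sub_one, Equiv.Perm.mul_apply, ih, Equiv.Perm.inv_def, vmap_symm_apply]
    exact Prod.ext rfl (by push_cast; ring)

section Regions

variable {σ : ℝ ≃ ℝ}

lemma mem_Pset_iff_symm (hσ : StrictMono σ) (hodd : Function.Odd σ) (p : ℝ × ℝ) :
    p ∈ Pset σ ↔ |σ.symm p.2| ≤ |p.1| ∧ p.1 ≠ σ.symm p.2 := by
  have hs := hσ.equiv_symm
  have h0 : σ.symm 0 = 0 := hodd.equiv_symm.map_zero
  rw [abs_le_abs_and_ne_iff, Pset, mem_union, mem_image_equiv, mem_image_equiv, Equiv.symm_symm,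
    mem_Yset_iff, mem_Xset_iff]
  simp only [hmap_apply, hmap_symm_apply, mul_nonneg_iff, mul_nonpos_iff, hs.apply_nonneg_iff h0,
    hs.apply_nonpos_iff h0, hs.injective.ne_iff' h0]

lemma mem_Qset_iff (hσ : StrictMono σ) (hodd : Function.Odd σ) (p : ℝ × ℝ) :
    p ∈ Qset σ ↔ |σ p.1| ≤ |p.2| ∧ p.2 ≠ -σ p.1 := by
  have h0 : σ 0 = 0 := hodd.map_zero
  rw [abs_le_abs_and_ne_neg_iff, Qset, mem_union, mem_image_equiv, mem_image_equiv,
    Equiv.symm_symm, mem_Yset_iff, mem_Xset_iff]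
  simp only [vmap_apply, vmap_symm_apply, mul_nonneg_iff, mul_nonpos_iff, hσ.apply_nonneg_iff h0,
    hσ.apply_nonpos_iff h0, hσ.injective.ne_iff' h0]

lemma mem_Pset_iff (hσ : StrictMono σ) (hodd : Function.Odd σ) (p : ℝ × ℝ) :
    p ∈ Pset σ ↔ |p.2| ≤ |σ p.1| ∧ p.2 ≠ σ p.1 := by
  rw [mem_Pset_iff_symm hσ hodd, ← hσ.abs_apply_le_abs_apply_iff_of_odd hodd,
    Equiv.apply_symm_apply, Ne, Equiv.eq_symm_apply, eq_comm]

lemma mem_Qset_iff_symm (hσ : StrictMono σ) (hodd : Function.Odd σ) (p : ℝ × ℝ) :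
    p ∈ Qset σ ↔ |p.1| ≤ |σ.symm p.2| ∧ p.1 ≠ -σ.symm p.2 := by
  rw [mem_Qset_iff hσ hodd, ← hσ.abs_apply_le_abs_apply_iff_of_odd hodd p.1,
    Equiv.apply_symm_apply, ← hodd.equiv_symm, Ne, Ne, Equiv.eq_symm_apply,
    eq_neg_iff_add_eq_zero, eq_neg_iff_add_eq_zero, add_comm]

end Regions

/-- Ping-pong inclusions: v_σ^{2k}(P) ⊆ Q and h_σ^{2l}(Q) ⊆ P for nonzero integers. -/
theorem stmt_4 (σ : ℝ ≃ ℝ) (hmono : StrictMono σ) (hodd : ∀ x : ℝ, σ (-x) = -σ x) :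
    (∀ k : ℤ, k ≠ 0 → ⇑((vmap σ : Equiv.Perm (ℝ × ℝ)) ^ (2 * k)) '' Pset σ ⊆ Qset σ) ∧
    (∀ l : ℤ, l ≠ 0 → ⇑((hmap σ : Equiv.Perm (ℝ × ℝ)) ^ (2 * l)) '' Qset σ ⊆ Pset σ) := by
  refine ⟨fun k hk => ?_, fun l hl => ?_⟩
  · rintro _ ⟨p, hp, rfl⟩
    rw [mem_Pset_iff hmono hodd] at hp
    rw [vmap_zpow_apply, mem_Qset_iff hmono hodd]
    exact abs_le_abs_add_mul_and_ne_neg (two_le_abs_intCast_two_mul hk) hp.1 hp.2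
  · rintro _ ⟨p, hp, rfl⟩
    rw [mem_Qset_iff_symm hmono hodd] at hp
    rw [hmap_zpow_apply, mem_Pset_iff_symm hmono hodd]
    -- the same inequality, for `s = -σ⁻¹ y` and `-n` in place of `n`
    have key := abs_le_abs_add_mul_and_ne_neg (n := -((2 * l : ℤ) : ℝ))
      (by rw [abs_neg]; exact two_le_abs_intCast_two_mul hl) (hp.1.trans_eq (abs_neg _).symm) hp.2
    simpa only [abs_neg, neg_mul_neg, neg_neg] using key
end
end

section
/- Let (p_n) = ((x_n, y_n)) be a sequence in ℝ² converging to (0,0) with y_n > 0 for all n. Then the closure of the set {w(p_n) : n ∈ ℕ, w in the monoid generated by h_σ and v_σ} contains the positive x-axis {(x,0) : x ≥ 0}. -/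
open Set

noncomputable section

lemma hmap_pow_exists (σ : ℝ ≃ ℝ) : ∀ k : ℕ,
    ∃ w ∈ (Submonoid.closure {(⇑(hmap σ) : Function.End (ℝ × ℝ)), ⇑(vmap σ)} :
      Submonoid (Function.End (ℝ × ℝ))),
    ∀ z : ℝ × ℝ, w z = (z.1 + k * σ.symm z.2, z.2)
  | 0 => ⟨1, one_mem _, fun z => by
      show z = _
      simp⟩
  | (k+1) => by
    obtain ⟨w, hw, hwz⟩ := hmap_pow_exists σ k
    let h : Function.End (ℝ × ℝ) := ⇑(hmap σ)
    refine ⟨h * w,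
      mul_mem (Submonoid.subset_closure (Set.mem_insert _ _)) hw, fun z => ?_⟩
    show (hmap σ) (w z) = _
    rw [hwz z]
    simp only [hmap, Equiv.coe_fn_mk]
    rw [Prod.ext_iff]
    refine ⟨?_, rfl⟩
    push_cast
    ring

/-- If p_n → 0 with second coordinates positive, the closure of the monoid
orbit of the p_n contains the nonnegative x-axis. -/
theorem stmt_7 (σ : ℝ ≃ ℝ) (hmono : StrictMono σ) (hodd : ∀ x : ℝ, σ (-x) = -σ x)
    (p : ℕ → ℝ × ℝ) (hlim : Filter.Tendsto p Filter.atTop (nhds (0 : ℝ × ℝ)))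
    (hy : ∀ n, 0 < (p n).2) :
    {q : ℝ × ℝ | q.2 = 0 ∧ 0 ≤ q.1} ⊆
      closure {q : ℝ × ℝ | ∃ n : ℕ,
        ∃ w ∈ (Submonoid.closure {(⇑(hmap σ) : Function.End (ℝ × ℝ)), ⇑(vmap σ)} :
          Submonoid (Function.End (ℝ × ℝ))), w (p n) = q} := by
  intro q hq
  obtain ⟨hq2, hq1⟩ := hq
  have hσ0 : σ 0 = 0 := by have h := hodd 0; rw [neg_zero] at h; linarith
  have hsymm0 : σ.symm 0 = 0 := by
    conv_lhs => rw [← hσ0]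
    exact σ.symm_apply_apply 0
  let e : ℝ ≃o ℝ := StrictMono.orderIsoOfSurjective σ hmono σ.surjective
  have hecoe : ∀ y : ℝ, σ.symm y = e.symm y := by
    intro y
    apply σ.injective
    rw [σ.apply_symm_apply]
    exact (e.apply_symm_apply y).symm
  have hsymm_mono : StrictMono (σ.symm : ℝ → ℝ) := by
    have := e.symm.strictMono
    intro a b hab
    rw [hecoe a, hecoe b]; exact this hab
  have hcont : Continuous (σ.symm : ℝ → ℝ) := by
    have : (σ.symm : ℝ → ℝ) = ⇑e.symm := funext hecoe
    rw [this]; exact e.symm.continuous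
  -- d n := σ.symm (p n).2 → 0
  have hd : Filter.Tendsto (fun n => σ.symm (p n).2) Filter.atTop (nhds 0) := by
    have h2 : Filter.Tendsto (fun n => (p n).2) Filter.atTop (nhds (0 : ℝ)) :=
      (continuous_snd.tendsto (0 : ℝ × ℝ)).comp hlim
    have := (hcont.tendsto 0).comp h2
    rwa [hsymm0] at this
  rw [Metric.mem_closure_iff]
  intro ε hε
  have hε2 : 0 < ε / 2 := by linarith
  have h1 : ∀ᶠ n in Filter.atTop, dist (p n) 0 < ε / 2 :=
    (Metric.tendsto_nhds.mp hlim) _ hε2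
  have h2 : ∀ᶠ n in Filter.atTop, dist (σ.symm (p n).2) 0 < ε / 2 :=
    (Metric.tendsto_nhds.mp hd) _ hε2
  obtain ⟨n, hn1, hn2⟩ := (h1.and h2).exists
  set x := (p n).1 with hx
  set y := (p n).2 with hy'
  set d := σ.symm y with hdd
  have hdpos : 0 < d := by
    have := hsymm_mono (hy n)
    rwa [hsymm0] at this
  have hxlt : |x| < ε / 2 := by
    have : dist x 0 ≤ dist (p n) 0 := by
      rw [Prod.dist_eq]; exact le_max_left _ _
    rw [Real.dist_eq, sub_zero] at this
    linarith
  have hylt : |y| < ε / 2 := by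
    have : dist y 0 ≤ dist (p n) 0 := by
      rw [Prod.dist_eq]; exact le_max_right _ _
    rw [Real.dist_eq, sub_zero] at this
    linarith
  have hdlt : d < ε / 2 := by
    rw [Real.dist_eq, sub_zero] at hn2
    calc d ≤ |d| := le_abs_self d
    _ < ε / 2 := hn2
  set a := q.1 with ha
  set k : ℕ := ⌊(a - x) / d⌋₊ with hk
  have hclose : |x + k * d - a| < ε / 2 := by
    rcases le_or_gt a x with hax | hax
    · have hk0 : k = 0 := by
        rw [hk, Nat.floor_eq_zero.mpr]
        have : (a - x) / d ≤ 0 := div_nonpos_of_nonpos_of_nonneg (by linarith) hdpos.le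
        linarith
      rw [hk0]
      simp only [Nat.cast_zero, zero_mul, add_zero]
      rw [abs_sub_lt_iff]
      constructor
      · have : x ≤ |x| := le_abs_self x
        linarith
      · linarith [abs_nonneg x, neg_abs_le x]
    · have ht : 0 ≤ (a - x) / d := div_nonneg (by linarith) hdpos.le
      have hfl : (k : ℝ) ≤ (a - x) / d := Nat.floor_le ht
      have hfu : (a - x) / d < k + 1 := Nat.lt_floor_add_one _
      have h1' : (k : ℝ) * d ≤ a - x := by
        rw [← le_div_iff₀ hdpos]; exact hfl
      have h2' : a - x < (k + 1) * d := by
        rw [← div_lt_iff₀ hdpos]; exact hfu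
      rw [abs_sub_lt_iff]
      constructor <;> nlinarith
  obtain ⟨w, hwmem, hwz⟩ := hmap_pow_exists σ k
  refine ⟨w (p n), ⟨n, w, hwmem, rfl⟩, ?_⟩
  have hwval : w (p n) = (x + k * d, y) := hwz (p n)
  rw [hwval, Prod.dist_eq]
  apply max_lt
  · rw [Real.dist_eq]
    calc |q.1 - (x + ↑k * d)| = |x + ↑k * d - a| := abs_sub_comm _ _
    _ < ε := by linarith
  · rw [hq2, Real.dist_eq, zero_sub, abs_neg]
    linarith
end
end

section
/- Every point of ℝ² that does not lie on a σ-rational line has a dense orbit in ℝ² under the group Γ(σ) generated by h_σ and v_σ. -/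
/-!
On the open first quadrant the inverses of the positive words in `h_σ`, `v_σ` run a Euclidean
algorithm: `v_σ⁻ⁿ` reduces `y` modulo `σ x`, then `h_σ⁻ᵐ` reduces `x` modulo `σ⁻¹ y`, and each
round at least halves `x`. At a σ-irrational point the algorithm never reaches an axis, so the
orbit comes arbitrarily close to `0` off the axes; conjugation by `(x, y) ↦ (-y, x)` (which
exchanges `σ` and `σ⁻¹`) and by `-id` (which commutes with `Γ(σ)` since `σ` is odd) reduce the
other quadrants to the first. If `q` is such a point near `0`, the points `v_σᵏ q` form a fine
vertical lattice near the `y`-axis, so the orbit closure contains the axes.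

If a ball in the first quadrant met no line `g(Ox)`, the quotients of the Euclidean algorithm
would never be integers on it, hence (the ball being connected) constant, so each round would
act on the whole ball by a single area-preserving map while squeezing it into boxes of area
tending to `0`. Hence the preimages of the axes under `Γ(σ)` are dense; as the orbit closure is
`Γ(σ)`-invariant and contains the axes, it is the whole plane.
-/

open Set

noncomputable section

open Filter Topology MeasureTheory

theorem MonoidHom.apply_mem_closure_image {M N : Type*} [Monoid M] [Monoid N] (f : M →* N)
    {S : Set M} {x : M} (hx : x ∈ Submonoid.closure S) : f x ∈ Submonoid.closure (f '' S) :=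
  MonoidHom.map_mclosure f S ▸ Submonoid.mem_map_of_mem f hx

theorem IsPreconnected.exists_int_forall_mem_Ioo {α : Type*} [TopologicalSpace α] {S : Set α}
    (hS : IsPreconnected S) {φ : α → ℝ} (hφ : ContinuousOn φ S)
    (hφS : ∀ z ∈ S, ∀ n : ℤ, φ z ≠ n) : ∃ n : ℤ, ∀ z ∈ S, φ z ∈ Ioo (n : ℝ) (n + 1) := by
  rcases S.eq_empty_or_nonempty with rfl | ⟨z₀, hz₀⟩
  · simp
  have hIVT : ∀ {a b}, a ∈ S → b ∈ S → ∀ n : ℤ, (n : ℝ) ∉ Icc (φ a) (φ b) := fun ha hb n hn => by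
    obtain ⟨c, hc, hcn⟩ := hS.intermediate_value ha hb hφ hn
    exact hφS c hc n hcn
  refine ⟨⌊φ z₀⌋, fun z hz => ⟨?_, ?_⟩⟩
  · by_contra! h
    exact hIVT hz hz₀ _ ⟨h, Int.floor_le _⟩
  · by_contra! h
    exact hIVT hz₀ hz (⌊φ z₀⌋ + 1) (by push_cast; exact ⟨(Int.lt_floor_add_one _).le, h⟩)

theorem IsPreconnected.exists_nat_forall_sub_mul_mem_Ioo {α : Type*} [TopologicalSpace α]
    {S : Set α} (hS : IsPreconnected S) {f c : α → ℝ} (hf : ContinuousOn f S)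
    (hc : ContinuousOn c S) (hf0 : ∀ z ∈ S, 0 < f z) (hc0 : ∀ z ∈ S, 0 < c z)
    (hfc : ∀ z ∈ S, ∀ n : ℕ, f z ≠ n * c z) : ∃ n : ℕ, ∀ z ∈ S, f z - n * c z ∈ Ioo 0 (c z) := by
  have hφ : ∀ z ∈ S, 0 < f z / c z := fun z hz => div_pos (hf0 z hz) (hc0 z hz)
  obtain ⟨n, hn⟩ := hS.exists_int_forall_mem_Ioo (φ := fun z => f z / c z)
    (hf.div hc fun z hz => (hc0 z hz).ne')
    fun z hz n h => by
      lift n to ℕ using by exact_mod_cast h ▸ (hφ z hz).le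
      rw [div_eq_iff (hc0 z hz).ne'] at h
      exact hfc z hz n (by exact_mod_cast h)
  refine ⟨n.toNat, fun z hz => ?_⟩
  obtain ⟨h1, h2⟩ := hn z hz
  have hn0 : (-1 : ℤ) < n := by exact_mod_cast (by linarith [hφ z hz] : (-1 : ℝ) < n)
  have hc := hc0 z hz
  rw [lt_div_iff₀ hc] at h1
  rw [div_lt_iff₀ hc] at h2
  rw [show ((n.toNat : ℕ) : ℝ) = n by exact_mod_cast Int.toNat_of_nonneg (by omega)]
  constructor <;> linarith

theorem measurePreserving_vertical_shear {f : ℝ → ℝ} (hf : Measurable f) :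
    MeasurePreserving (fun z : ℝ × ℝ => (z.1, z.2 + f z.1)) :=
  (MeasurePreserving.id volume).skew_product (by fun_prop)
    (ae_of_all _ fun x => map_add_right_eq_self volume (f x))

theorem measurePreserving_horizontal_shear {f : ℝ → ℝ} (hf : Measurable f) :
    MeasurePreserving (fun z : ℝ × ℝ => (z.1 + f z.2, z.2)) :=
  (Measure.measurePreserving_swap.comp (measurePreserving_vertical_shear hf)).comp
    Measure.measurePreserving_swap

theorem mem_closure_of_fst_eq_zero {O : Set (ℝ × ℝ)} {s : ℝ → ℝ} (hs : ContinuousAt s 0)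
    (hs0 : ∀ x, s x = 0 ↔ x = 0) (hO : ∀ q ∈ O, ∀ k : ℤ, (q.1, q.2 + k * s q.1) ∈ O)
    (hsmall : ∀ ε > 0, ∃ q ∈ O, |q.1| ∈ Ioo 0 ε) {a : ℝ × ℝ} (ha : a.1 = 0) : a ∈ closure O := by
  refine Metric.mem_closure_iff.mpr fun ε hε => ?_
  obtain ⟨δ, hδ, hsδ⟩ := Metric.continuousAt_iff.mp hs ε hε
  obtain ⟨q, hq, hq0, hqε⟩ := hsmall (min δ ε) (lt_min hδ hε)
  have hsq : s q.1 ≠ 0 := fun h => (abs_pos.mp hq0) ((hs0 _).mp h)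
  have hsε : |s q.1| < ε := by
    simpa [(hs0 0).mpr rfl] using hsδ (x := q.1) (by simpa using hqε.trans_le (min_le_left _ _))
  set k := round ((a.2 - q.2) / s q.1)
  have hk : |a.2 - (q.2 + k * s q.1)| ≤ |s q.1| / 2 := by
    calc |a.2 - (q.2 + k * s q.1)| = |s q.1| * |(a.2 - q.2) / s q.1 - k| := by
          rw [← abs_mul]; congr 1; field_simp; ring
      _ ≤ |s q.1| * (1 / 2) := by gcongr; exact abs_sub_round _
      _ = |s q.1| / 2 := by ring
  refine ⟨(q.1, q.2 + k * s q.1), hO q hq k, ?_⟩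
  rw [Prod.dist_eq, Real.dist_eq, Real.dist_eq, ha, zero_sub, abs_neg]
  exact max_lt (hqε.trans_le (min_le_right _ _)) (by linarith)

namespace ShearGroup

variable {σ : ℝ ≃ ℝ}

@[simp] lemma hmap_apply (z : ℝ × ℝ) : hmap σ z = (z.1 + σ.symm z.2, z.2) := rfl
@[simp] lemma vmap_apply (z : ℝ × ℝ) : vmap σ z = (z.1, z.2 + σ z.1) := rfl
@[simp] lemma hmap_symm_apply (z : ℝ × ℝ) : (hmap σ).symm z = (z.1 - σ.symm z.2, z.2) := rfl
@[simp] lemma vmap_symm_apply (z : ℝ × ℝ) : (vmap σ).symm z = (z.1, z.2 - σ z.1) := rfl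

lemma hmap_zpow_apply (k : ℤ) (z : ℝ × ℝ) : (hmap σ ^ k) z = (z.1 + k * σ.symm z.2, z.2) := by
  induction k using Int.induction_on generalizing z with
  | zero => simp
  | succ k ih => rw [zpow_add_one, Equiv.Perm.mul_apply, ih]; simp; ring
  | pred k ih => rw [zpow_sub_one, Equiv.Perm.mul_apply, ih]; simp; ring

lemma vmap_zpow_apply (k : ℤ) (z : ℝ × ℝ) : (vmap σ ^ k) z = (z.1, z.2 + k * σ z.1) := by
  induction k using Int.induction_on generalizing z with
  | zero => simp
  | succ k ih => rw [zpow_add_one, Equiv.Perm.mul_apply, ih]; simp; ring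
  | pred k ih => rw [zpow_sub_one, Equiv.Perm.mul_apply, ih]; simp; ring

@[simp] lemma hmap_pow_symm_apply (n : ℕ) (z : ℝ × ℝ) :
    (hmap σ ^ n).symm z = (z.1 - n * σ.symm z.2, z.2) := by
  rw [← Equiv.Perm.inv_def, ← zpow_natCast, ← zpow_neg, hmap_zpow_apply]; push_cast; ring_nf

@[simp] lemma vmap_pow_symm_apply (n : ℕ) (z : ℝ × ℝ) :
    (vmap σ ^ n).symm z = (z.1, z.2 - n * σ z.1) := by
  rw [← Equiv.Perm.inv_def, ← zpow_natCast, ← zpow_neg, vmap_zpow_apply]; push_cast; ring_nf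

lemma symm_map_neg (hodd : ∀ x, σ (-x) = -σ x) (x : ℝ) : σ.symm (-x) = -σ.symm x := by
  rw [Equiv.symm_apply_eq, hodd, Equiv.apply_symm_apply]

lemma map_zero_of_odd (hodd : ∀ x, σ (-x) = -σ x) : σ 0 = 0 := by
  linarith [neg_zero (G := ℝ) ▸ hodd 0]

lemma strictMono_symm (hmono : StrictMono σ) : StrictMono σ.symm := fun a b h =>
  hmono.lt_iff_lt.mp (by simpa using h)

lemma continuous_of_strictMono (hmono : StrictMono σ) : Continuous σ :=
  hmono.monotone.continuous_of_surjective σ.surjective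

lemma pos_of_strictMono (hmono : StrictMono σ) (hodd : ∀ x, σ (-x) = -σ x) {x : ℝ} (hx : 0 < x) :
    0 < σ x :=
  map_zero_of_odd hodd ▸ hmono hx

variable (σ) in
def shearMonoid : Submonoid (Equiv.Perm (ℝ × ℝ)) := Submonoid.closure {hmap σ, vmap σ}

variable (σ) in
def shearGroup : Subgroup (Equiv.Perm (ℝ × ℝ)) := Subgroup.closure {hmap σ, vmap σ}

lemma hmap_mem : hmap σ ∈ shearMonoid σ := Submonoid.subset_closure (by simp)

lemma vmap_mem : vmap σ ∈ shearMonoid σ := Submonoid.subset_closure (by simp)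

lemma mem_shearGroup_of_mem_shearMonoid {g : Equiv.Perm (ℝ × ℝ)} (hg : g ∈ shearMonoid σ) :
    g ∈ shearGroup σ :=
  Submonoid.closure_le.mpr (Subgroup.subset_closure (k := {hmap σ, vmap σ})) hg

variable (σ) in
def shearOrbit (p : ℝ × ℝ) : Set (ℝ × ℝ) := {q | ∃ g ∈ shearGroup σ, g p = q}

lemma apply_mem_shearOrbit {p q : ℝ × ℝ} (hq : q ∈ shearOrbit σ p) {g : Equiv.Perm (ℝ × ℝ)}
    (hg : g ∈ shearGroup σ) : g q ∈ shearOrbit σ p := by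
  obtain ⟨g', hg', rfl⟩ := hq
  exact ⟨g * g', mul_mem hg hg', rfl⟩

def axes : Set (ℝ × ℝ) := {z | z.1 = 0 ∨ z.2 = 0}

lemma continuous_of_mem_shearGroup (hmono : StrictMono σ) {g : Equiv.Perm (ℝ × ℝ)}
    (hg : g ∈ shearGroup σ) : Continuous g := by
  have := continuous_of_strictMono hmono
  have := continuous_of_strictMono (strictMono_symm hmono)
  induction hg using Subgroup.closure_induction'' with
  | mem x hx =>
    rcases hx with rfl | rfl
    · exact show Continuous fun z : ℝ × ℝ => (z.1 + σ.symm z.2, z.2) by fun_prop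
    · exact show Continuous fun z : ℝ × ℝ => (z.1, z.2 + σ z.1) by fun_prop
  | inv_mem x hx =>
    rcases hx with rfl | rfl
    · exact show Continuous fun z : ℝ × ℝ => (z.1 - σ.symm z.2, z.2) by fun_prop
    · exact show Continuous fun z : ℝ × ℝ => (z.1, z.2 - σ z.1) by fun_prop
  | one => exact continuous_id
  | mul x y _ _ hx hy => exact hx.comp hy

lemma measurePreserving_of_mem_shearGroup (hmono : StrictMono σ) {g : Equiv.Perm (ℝ × ℝ)}
    (hg : g ∈ shearGroup σ) : MeasurePreserving g := by
  have hσ := (continuous_of_strictMono hmono).measurable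
  have hσ' := (continuous_of_strictMono (strictMono_symm hmono)).measurable
  induction hg using Subgroup.closure_induction'' with
  | mem x hx =>
    rcases hx with rfl | rfl
    · exact measurePreserving_horizontal_shear hσ'
    · exact measurePreserving_vertical_shear hσ
  | inv_mem x hx =>
    rcases hx with rfl | rfl
    · convert measurePreserving_horizontal_shear hσ'.neg using 1
      ext z <;> simp [sub_eq_add_neg]
    · convert measurePreserving_vertical_shear hσ.neg using 1
      ext z <;> simp [sub_eq_add_neg]
  | one => exact MeasurePreserving.id volume
  | mul x y _ _ hx hy => exact hx.comp hy

lemma map_neg_of_mem_shearGroup (hodd : ∀ x, σ (-x) = -σ x) {g : Equiv.Perm (ℝ × ℝ)}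
    (hg : g ∈ shearGroup σ) (z : ℝ × ℝ) : g (-z) = -g z := by
  induction hg using Subgroup.closure_induction'' generalizing z with
  | mem x hx => rcases hx with rfl | rfl <;> simp [hodd, symm_map_neg hodd] <;> ring
  | inv_mem x hx => rcases hx with rfl | rfl <;> simp [hodd, symm_map_neg hodd] <;> ring
  | one => rfl
  | mul x y _ _ hx hy => simp [hx, hy]

lemma mapsTo_closure_shearOrbit (hmono : StrictMono σ) {p : ℝ × ℝ} {g : Equiv.Perm (ℝ × ℝ)}
    (hg : g ∈ shearGroup σ) : MapsTo g (closure (shearOrbit σ p)) (closure (shearOrbit σ p)) :=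
  MapsTo.closure (f := g) (fun _ hq => apply_mem_shearOrbit hq hg)
    (continuous_of_mem_shearGroup hmono hg)

-- `z` lies on none of the lines `g '' Ox` (resp. `g⁻¹ '' Oy`) with `g ∈ shearMonoid σ`
variable (σ) in
def AvoidsPosLines (z : ℝ × ℝ) : Prop := ∀ g ∈ shearMonoid σ, (g⁻¹ z).2 ≠ 0

variable (σ) in
def AvoidsNegLines (z : ℝ × ℝ) : Prop := ∀ g ∈ shearMonoid σ, (g z).1 ≠ 0

lemma avoidsPosLines_of_notMem_ratLines {p : ℝ × ℝ} (hp : ∀ L ∈ ratLines σ, p ∉ L) :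
    AvoidsPosLines σ p := by
  intro g hg h0
  have hmem := (MulAction.toEndHom (α := ℝ × ℝ)).apply_mem_closure_image hg
  rw [image_pair] at hmem
  exact hp _ (Or.inl (Or.inr ⟨_, hmem, rfl⟩)) ⟨g⁻¹ p, h0, g.apply_symm_apply p⟩

lemma avoidsNegLines_of_notMem_ratLines {p : ℝ × ℝ} (hp : ∀ L ∈ ratLines σ, p ∉ L) :
    AvoidsNegLines σ p := by
  intro g hg h0
  have hmem := (MulAction.toEndHom (α := ℝ × ℝ)).apply_mem_closure_image
    ((Submonoid.mem_closure_inv _ g⁻¹).mpr (by rwa [inv_inv]))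
  rw [inv_insert, inv_singleton, image_pair] at hmem
  exact hp _ (Or.inr ⟨_, hmem, rfl⟩) ⟨g p, h0, g.symm_apply_apply p⟩

lemma AvoidsPosLines.neg (hodd : ∀ x, σ (-x) = -σ x) {z : ℝ × ℝ} (hz : AvoidsPosLines σ z) :
    AvoidsPosLines σ (-z) := fun g hg => by
  simpa [map_neg_of_mem_shearGroup hodd (inv_mem (mem_shearGroup_of_mem_shearMonoid hg))]
    using hz g hg

lemma AvoidsNegLines.neg (hodd : ∀ x, σ (-x) = -σ x) {z : ℝ × ℝ} (hz : AvoidsNegLines σ z) :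
    AvoidsNegLines σ (-z) := fun g hg => by
  simpa [map_neg_of_mem_shearGroup hodd (mem_shearGroup_of_mem_shearMonoid hg)] using hz g hg

def rot : Equiv.Perm (ℝ × ℝ) where
  toFun z := (-z.2, z.1)
  invFun z := (z.2, -z.1)
  left_inv z := by simp
  right_inv z := by simp

@[simp] lemma rot_apply (z : ℝ × ℝ) : rot z = (-z.2, z.1) := rfl
@[simp] lemma rot_symm_apply (z : ℝ × ℝ) : rot.symm z = (z.2, -z.1) := rfl

lemma rot_inv_mul_inv_mul_rot_mem (hodd : ∀ x, σ (-x) = -σ x) {k : Equiv.Perm (ℝ × ℝ)}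
    (hk : k ∈ shearMonoid σ.symm) : rot⁻¹ * k⁻¹ * rot ∈ shearMonoid σ := by
  induction hk using Submonoid.closure_induction with
  | mem x hx =>
    rcases hx with rfl | rfl
    · convert vmap_mem (σ := σ) using 1
      ext z <;> simp [add_comm]
    · convert hmap_mem (σ := σ) using 1
      ext z <;> simp [symm_map_neg hodd]
  | one => simp [one_mem]
  | mul x y _ _ hx hy =>
    convert mul_mem hy hx using 1
    group

lemma AvoidsNegLines.rot (hodd : ∀ x, σ (-x) = -σ x) {z : ℝ × ℝ} (hz : AvoidsNegLines σ z) :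
    AvoidsPosLines σ.symm (rot z) := fun k hk => by
  simpa using hz _ (rot_inv_mul_inv_mul_rot_mem hodd hk)

lemma AvoidsPosLines.inv_apply {z : ℝ × ℝ} (hz : AvoidsPosLines σ z) {g : Equiv.Perm (ℝ × ℝ)}
    (hg : g ∈ shearMonoid σ) : AvoidsPosLines σ (g⁻¹ z) := fun k hk => by
  simpa [mul_inv_rev] using hz (g * k) (mul_mem hg hk)

theorem exists_euclid_step (hmono : StrictMono σ) (hodd : ∀ x, σ (-x) = -σ x) {S : Set (ℝ × ℝ)}
    (hS : IsPreconnected S) (hSQ : S ⊆ Ioi 0 ×ˢ Ioi 0) (hSA : ∀ z ∈ S, AvoidsPosLines σ z) :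
    ∃ g ∈ shearMonoid σ, ∀ z ∈ S,
      g⁻¹ z ∈ Ioi 0 ×ˢ Ioi 0 ∧ 2 * (g⁻¹ z).1 < z.1 ∧ (g⁻¹ z).2 < σ z.1 := by
  have := continuous_of_strictMono hmono
  have := continuous_of_strictMono (strictMono_symm hmono)
  obtain ⟨n, hn⟩ := hS.exists_nat_forall_sub_mul_mem_Ioo (f := fun z => z.2)
    (c := fun z => σ z.1) (by fun_prop) (by fun_prop) (fun z hz => (hSQ hz).2)
    (fun z hz => pos_of_strictMono hmono hodd (hSQ hz).1)
    fun z hz n h => hSA z hz _ (pow_mem vmap_mem n) (by simp [h])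
  obtain ⟨m, hm⟩ := hS.exists_nat_forall_sub_mul_mem_Ioo (f := fun z => z.1)
    (c := fun z => σ.symm (z.2 - n * σ z.1)) (by fun_prop) (by fun_prop) (fun z hz => (hSQ hz).1)
    (fun z hz => pos_of_strictMono (strictMono_symm hmono) (symm_map_neg hodd) (hn z hz).1)
    fun z hz m h => by
      rcases m with _ | j
      · simp [(mem_Ioi.mp (hSQ hz).1).ne'] at h
      -- one step earlier the division lands on the graph of `σ`, which `(vmap σ)⁻¹` maps to `Ox`
      refine hSA z hz (vmap σ ^ n * hmap σ ^ j * vmap σ)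
        (mul_mem (mul_mem (pow_mem vmap_mem n) (pow_mem hmap_mem j)) vmap_mem) ?_
      have : z.1 - j * σ.symm (z.2 - n * σ z.1) = σ.symm (z.2 - n * σ z.1) := by
        push_cast at h; linarith
      simp [mul_inv_rev, this]
  refine ⟨vmap σ ^ n * hmap σ ^ m, mul_mem (pow_mem vmap_mem n) (pow_mem hmap_mem m),
    fun z hz => ?_⟩
  obtain ⟨hy0, hy⟩ := hn z hz
  obtain ⟨hx0, hx⟩ := hm z hz
  have hc : σ.symm (z.2 - n * σ z.1) < z.1 := by simpa using strictMono_symm hmono hy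
  have hcm : σ.symm (z.2 - n * σ z.1) ≤ m * σ.symm (z.2 - n * σ z.1) := by
    rcases m with _ | m
    · simp at hx; linarith
    · push_cast; nlinarith
  simp only [mul_inv_rev, Equiv.Perm.mul_apply, Equiv.Perm.inv_def, vmap_pow_symm_apply,
    hmap_pow_symm_apply]
  exact ⟨⟨hx0, hy0⟩, by linarith, hy⟩

theorem exists_euclid_steps (hmono : StrictMono σ) (hodd : ∀ x, σ (-x) = -σ x) {B : Set (ℝ × ℝ)}
    (hB : IsPreconnected B) (hBQ : B ⊆ Ioi 0 ×ˢ Ioi 0) (hBA : ∀ z ∈ B, AvoidsPosLines σ z)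
    (k : ℕ) : ∃ g ∈ shearMonoid σ, ∀ z ∈ B, g⁻¹ z ∈ Ioi 0 ×ˢ Ioi 0 ∧
      (g⁻¹ z).1 ≤ z.1 / 2 ^ (k + 1) ∧ (g⁻¹ z).2 < σ (z.1 / 2 ^ k) := by
  induction k with
  | zero =>
    obtain ⟨g, hg, h⟩ := exists_euclid_step hmono hodd hB hBQ hBA
    exact ⟨g, hg, fun z hz => ⟨(h z hz).1, by linarith [(h z hz).2.1], by simpa using (h z hz).2.2⟩⟩
  | succ k ih =>
    obtain ⟨g, hg, h⟩ := ih
    have hcont :=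
      continuous_of_mem_shearGroup hmono (inv_mem (mem_shearGroup_of_mem_shearMonoid hg))
    obtain ⟨g', hg', h'⟩ := exists_euclid_step hmono hodd (hB.image _ hcont.continuousOn)
      (image_subset_iff.mpr fun z hz => (h z hz).1)
      (forall_mem_image.mpr fun z hz => (hBA z hz).inv_apply hg)
    refine ⟨g * g', mul_mem hg hg', fun z hz => ?_⟩
    obtain ⟨-, h1, h2⟩ := h z hz
    obtain ⟨hQ', h1', h2'⟩ := h' _ (mem_image_of_mem _ hz)
    rw [mul_inv_rev, Equiv.Perm.mul_apply]
    refine ⟨hQ', ?_, h2'.trans_le (hmono.monotone h1)⟩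
    rw [pow_succ, ← div_div]
    linarith

theorem exists_inv_apply_mem_Ioo_prod_Ioo (hmono : StrictMono σ) (hodd : ∀ x, σ (-x) = -σ x)
    {p : ℝ × ℝ} (hp : p ∈ Ioi 0 ×ˢ Ioi 0) (hpA : AvoidsPosLines σ p) {ε : ℝ} (hε : 0 < ε) :
    ∃ g ∈ shearMonoid σ, g⁻¹ p ∈ Ioo 0 ε ×ˢ Ioo 0 ε := by
  have h1 : Tendsto (fun k : ℕ => p.1 / 2 ^ k) atTop (𝓝 0) :=
    tendsto_const_nhds.div_atTop (tendsto_pow_atTop_atTop_of_one_lt one_lt_two)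
  have h2 : Tendsto (fun k : ℕ => σ (p.1 / 2 ^ k)) atTop (𝓝 0) := by
    simpa [Function.comp_def, map_zero_of_odd hodd] using
      ((continuous_of_strictMono hmono).tendsto 0).comp h1
  obtain ⟨k, hk1, hk2⟩ :=
    ((h1.eventually (gt_mem_nhds hε)).and (h2.eventually (gt_mem_nhds hε))).exists
  obtain ⟨g, hg, h⟩ := exists_euclid_steps hmono hodd isPreconnected_singleton
    (singleton_subset_iff.mpr hp) (by simpa using hpA) k
  obtain ⟨hQ, hx, hy⟩ := h p rfl
  refine ⟨g, hg, ⟨hQ.1, hx.trans_lt ((div_le_div_of_nonneg_left hp.1.le (by positivity)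
    (pow_le_pow_right₀ one_le_two k.le_succ)).trans_lt hk1)⟩, ⟨hQ.2, hy.trans hk2⟩⟩

theorem exists_not_avoidsPosLines (hmono : StrictMono σ) (hodd : ∀ x, σ (-x) = -σ x)
    {U : Set (ℝ × ℝ)} (hU : IsOpen U) (hne : U.Nonempty) (hUQ : U ⊆ Ioi 0 ×ˢ Ioi 0) :
    ∃ z ∈ U, ¬AvoidsPosLines σ z := by
  by_contra! hA
  obtain ⟨t, ht⟩ := hne
  obtain ⟨r, hr, hball⟩ := Metric.isOpen_iff.mp hU t ht
  set X := t.1 + r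
  have hX0 : 0 < X := by have := (hUQ ht).1; simp only [mem_Ioi] at this; linarith
  have hX : ∀ z ∈ Metric.ball t r, z.1 ≤ X := fun z hz => by
    have := (abs_sub_lt_iff.mp (lt_of_le_of_lt (le_max_left _ _) (Metric.mem_ball.mp hz))).1
    linarith
  -- `g⁻¹` preserves area but squeezes the ball into a box of area `X / 2 ^ k * σ X`
  have hbound : ∀ k : ℕ, volume (Metric.ball t r) ≤ ENNReal.ofReal (X / 2 ^ k * σ X) := by
    intro k
    obtain ⟨g, hg, h⟩ := exists_euclid_steps hmono hodd (convex_ball t r).isPreconnected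
      (hball.trans hUQ) (fun z hz => hA z (hball hz)) k
    have hbox : Metric.ball t r ⊆ ⇑g⁻¹ ⁻¹' (Ioc 0 (X / 2 ^ k) ×ˢ Ioc 0 (σ X)) := fun z hz => by
      obtain ⟨hQ, h1, h2⟩ := h z hz
      have hz1 : 0 < z.1 := (hUQ (hball hz)).1
      have hzk : z.1 / 2 ^ k ≤ z.1 := div_le_self hz1.le (one_le_pow₀ one_le_two)
      refine ⟨⟨hQ.1, h1.trans ?_⟩, ⟨hQ.2, (h2.trans_le (hmono.monotone (hzk.trans ?_))).le⟩⟩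
      · calc z.1 / 2 ^ (k + 1) ≤ z.1 / 2 ^ k := div_le_div_of_nonneg_left hz1.le
              (by positivity) (pow_le_pow_right₀ one_le_two k.le_succ)
          _ ≤ X / 2 ^ k := by gcongr; exact hX z hz
      · exact hX z hz
    have hmp := measurePreserving_of_mem_shearGroup hmono
      (inv_mem (mem_shearGroup_of_mem_shearMonoid hg))
    calc volume (Metric.ball t r) ≤ volume (⇑g⁻¹ ⁻¹' (Ioc 0 (X / 2 ^ k) ×ˢ Ioc 0 (σ X))) :=
          measure_mono hbox
      _ = volume (Ioc 0 (X / 2 ^ k) ×ˢ Ioc 0 (σ X)) :=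
          hmp.measure_preimage (measurableSet_Ioc.prod measurableSet_Ioc).nullMeasurableSet
      _ = ENNReal.ofReal (X / 2 ^ k * σ X) := by
          rw [Measure.volume_eq_prod, Measure.prod_prod, Real.volume_Ioc, Real.volume_Ioc,
            sub_zero, sub_zero, ENNReal.ofReal_mul (by positivity : 0 ≤ X / 2 ^ k)]
  have hlim : Tendsto (fun k : ℕ => ENNReal.ofReal (X / 2 ^ k * σ X)) atTop (𝓝 0) := by
    simpa using ENNReal.tendsto_ofReal ((tendsto_const_nhds.div_atTop
      (tendsto_pow_atTop_atTop_of_one_lt one_lt_two)).mul_const (σ X))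
  exact (Metric.measure_ball_pos volume t hr).ne'
    (nonpos_iff_eq_zero.mp (ge_of_tendsto' hlim hbound))

theorem exists_apply_mem_axes_of_subset_Ioi_prod_Ioi (hmono : StrictMono σ)
    (hodd : ∀ x, σ (-x) = -σ x) {U : Set (ℝ × ℝ)} (hU : IsOpen U) (hne : U.Nonempty)
    (hUQ : U ⊆ Ioi 0 ×ˢ Ioi 0) : ∃ z ∈ U, ∃ g ∈ shearGroup σ, g z ∈ axes := by
  obtain ⟨z, hz, hA⟩ := exists_not_avoidsPosLines hmono hodd hU hne hUQ
  simp only [AvoidsPosLines, not_forall, not_not] at hA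
  obtain ⟨g, hg, h0⟩ := hA
  exact ⟨z, hz, g⁻¹, inv_mem (mem_shearGroup_of_mem_shearMonoid hg), Or.inr h0⟩

theorem exists_apply_mem_axes_of_subset_Ioi_prod_Iio (hmono : StrictMono σ)
    (hodd : ∀ x, σ (-x) = -σ x) {U : Set (ℝ × ℝ)} (hU : IsOpen U) (hne : U.Nonempty)
    (hUQ : U ⊆ Ioi 0 ×ˢ Iio 0) : ∃ z ∈ U, ∃ g ∈ shearGroup σ, g z ∈ axes := by
  have hrotU : IsOpen (rot '' U) := by
    rw [Equiv.image_eq_preimage_symm]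
    exact hU.preimage (show Continuous fun z : ℝ × ℝ => (z.2, -z.1) by fun_prop)
  obtain ⟨_, ⟨z, hz, rfl⟩, hA⟩ := exists_not_avoidsPosLines (strictMono_symm hmono)
    (symm_map_neg hodd) hrotU (hne.image _) (by
      rintro _ ⟨z, hz, rfl⟩
      simp only [mem_prod, mem_Ioi, rot_apply]
      exact ⟨neg_pos.mpr (hUQ hz).2, (hUQ hz).1⟩)
  have hB : ¬AvoidsNegLines σ z := fun h => hA (h.rot hodd)
  simp only [AvoidsNegLines, not_forall, not_not] at hB
  obtain ⟨g, hg, h0⟩ := hB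
  exact ⟨z, hz, g, mem_shearGroup_of_mem_shearMonoid hg, Or.inl h0⟩

theorem dense_setOf_apply_mem_axes (hmono : StrictMono σ) (hodd : ∀ x, σ (-x) = -σ x) :
    Dense {z | ∃ g ∈ shearGroup σ, g z ∈ axes} := by
  have hright : ∀ U : Set (ℝ × ℝ), IsOpen U → ∀ w ∈ U, 0 < w.1 →
      ∃ z ∈ U, ∃ g ∈ shearGroup σ, g z ∈ axes := by
    intro U hU w hw hw1
    rcases lt_trichotomy w.2 0 with hw2 | hw2 | hw2
    · obtain ⟨z, hz, h⟩ := exists_apply_mem_axes_of_subset_Ioi_prod_Iio hmono hodd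
        (hU.inter (isOpen_Ioi.prod isOpen_Iio)) ⟨w, hw, hw1, hw2⟩ inter_subset_right
      exact ⟨z, hz.1, h⟩
    · exact ⟨w, hw, 1, one_mem _, Or.inr hw2⟩
    · obtain ⟨z, hz, h⟩ := exists_apply_mem_axes_of_subset_Ioi_prod_Ioi hmono hodd
        (hU.inter (isOpen_Ioi.prod isOpen_Ioi)) ⟨w, hw, hw1, hw2⟩ inter_subset_right
      exact ⟨z, hz.1, h⟩
  refine dense_iff_inter_open.mpr fun U hU ⟨w, hw⟩ => ?_
  rcases lt_trichotomy w.1 0 with hw1 | hw1 | hw1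
  · obtain ⟨z, hz, g, hg, hgz⟩ := hright (-U) hU.neg (-w) (by simpa using hw) (by simpa using hw1)
    refine ⟨-z, hz, g, hg, ?_⟩
    rw [map_neg_of_mem_shearGroup hodd hg]
    simpa [axes] using hgz
  · exact ⟨w, hw, 1, one_mem _, Or.inl hw1⟩
  · obtain ⟨z, hz, h⟩ := hright U hU w hw hw1
    exact ⟨z, hz, h⟩

theorem exists_mem_shearGroup_abs_mem_Ioo (hmono : StrictMono σ) (hodd : ∀ x, σ (-x) = -σ x)
    {p : ℝ × ℝ} (hpos : AvoidsPosLines σ p) (hneg : AvoidsNegLines σ p) {ε : ℝ} (hε : 0 < ε) :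
    ∃ g ∈ shearGroup σ, |(g p).1| ∈ Ioo 0 ε ∧ |(g p).2| ∈ Ioo 0 ε := by
  wlog hp1 : 0 < p.1 generalizing p
  · have hp1' : p.1 < 0 := lt_of_le_of_ne (not_lt.mp hp1) (by simpa using hneg 1 (one_mem _))
    obtain ⟨g, hg, h⟩ := this (hpos.neg hodd) (hneg.neg hodd) (by simpa using hp1')
    exact ⟨g, hg, by simpa [map_neg_of_mem_shearGroup hodd hg] using h⟩
  rcases (show p.2 ≠ 0 by simpa using hpos 1 (one_mem _)).lt_or_gt with hp2 | hp2
  · obtain ⟨k, hk, h1, h2⟩ := exists_inv_apply_mem_Ioo_prod_Ioo (strictMono_symm hmono)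
      (symm_map_neg hodd) (p := rot p) ⟨neg_pos.mpr hp2, hp1⟩ (hneg.rot hodd) hε
    refine ⟨rot⁻¹ * k⁻¹ * rot,
      mem_shearGroup_of_mem_shearMonoid (rot_inv_mul_inv_mul_rot_mem hodd hk), ?_⟩
    have : (rot⁻¹ * k⁻¹ * rot) p = ((k⁻¹ (rot p)).2, -(k⁻¹ (rot p)).1) := rfl
    rw [this, abs_neg, abs_of_pos h1.1, abs_of_pos h2.1]
    exact ⟨h2, h1⟩
  · obtain ⟨g, hg, h1, h2⟩ := exists_inv_apply_mem_Ioo_prod_Ioo hmono hodd ⟨hp1, hp2⟩ hpos hε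
    refine ⟨g⁻¹, inv_mem (mem_shearGroup_of_mem_shearMonoid hg), ?_⟩
    rw [abs_of_pos h1.1, abs_of_pos h2.1]
    exact ⟨h1, h2⟩

theorem axes_subset_closure_shearOrbit (hmono : StrictMono σ) (hodd : ∀ x, σ (-x) = -σ x)
    {p : ℝ × ℝ}
    (hsmall : ∀ ε > 0, ∃ g ∈ shearGroup σ, |(g p).1| ∈ Ioo 0 ε ∧ |(g p).2| ∈ Ioo 0 ε) :
    axes ⊆ closure (shearOrbit σ p) := by
  have hzero : ∀ τ : ℝ ≃ ℝ, τ 0 = 0 → ∀ x, τ x = 0 ↔ x = 0 := fun τ h _ =>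
    τ.injective.eq_iff' h
  have hσ0 := map_zero_of_odd hodd
  rintro a (ha | ha)
  · refine mem_closure_of_fst_eq_zero (continuous_of_strictMono hmono).continuousAt
      (hzero σ hσ0) (fun q hq k => ?_) (fun ε hε => ?_) ha
    · simpa [vmap_zpow_apply] using
        apply_mem_shearOrbit hq (zpow_mem (mem_shearGroup_of_mem_shearMonoid vmap_mem) k)
    · obtain ⟨g, hg, h1, -⟩ := hsmall ε hε
      exact ⟨g p, ⟨g, hg, rfl⟩, h1⟩
  · have := mem_closure_of_fst_eq_zero (O := Prod.swap ⁻¹' shearOrbit σ p) (s := σ.symm)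
      (continuous_of_strictMono (strictMono_symm hmono)).continuousAt
      (hzero σ.symm (by rw [Equiv.symm_apply_eq, hσ0])) (fun q hq k => ?_) (fun ε hε => ?_)
      (a := a.swap) ha
    · have h := map_mem_closure (t := shearOrbit σ p) continuous_swap this fun _ hq => hq
      rwa [Prod.swap_swap] at h
    · simpa [hmap_zpow_apply] using
        apply_mem_shearOrbit hq (zpow_mem (mem_shearGroup_of_mem_shearMonoid hmap_mem) k)
    · obtain ⟨g, hg, -, h2⟩ := hsmall ε hε
      exact ⟨(g p).swap, ⟨g, hg, rfl⟩, h2⟩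

end ShearGroup

open ShearGroup in
/-- Every σ-irrational point has a dense orbit under the group Γ(σ)
generated by h_σ and v_σ. -/
theorem stmt_8 (σ : ℝ ≃ ℝ) (hmono : StrictMono σ) (hodd : ∀ x : ℝ, σ (-x) = -σ x)
    (p : ℝ × ℝ) (hp : ∀ L ∈ ratLines σ, p ∉ L) :
    Dense {q : ℝ × ℝ | ∃ g ∈ (Subgroup.closure {hmap σ, vmap σ} : Subgroup (Equiv.Perm (ℝ × ℝ))),
      g p = q} := by
  show Dense (shearOrbit σ p)
  have haxes := axes_subset_closure_shearOrbit hmono hodd fun ε hε =>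
    exists_mem_shearGroup_abs_mem_Ioo hmono hodd (avoidsPosLines_of_notMem_ratLines hp)
      (avoidsNegLines_of_notMem_ratLines hp) hε
  refine dense_closure.mp ((dense_setOf_apply_mem_axes hmono hodd).mono ?_)
  rintro z ⟨g, hg, hgz⟩
  simpa only [Equiv.Perm.inv_def, Equiv.symm_apply_apply] using
    mapsTo_closure_shearOrbit hmono (inv_mem hg) (haxes hgz)
end
end

section
/- Let σ(x) = sgn(x)x². Suppose x₀, y₀ > 0 with: y₀ rational but not a square of a rational; x₀ = a₀ + b₀√y₀ with a₀, b₀ rational, a₀ ≠ 0, |b₀| ≥ 1; and y₀ > x₀². Then the point (x₀, y₀) does not lie on any σ-rational line. In particular (−1+√2, 2) is σ-irrational. -/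
open Set

noncomputable section

/-- σ(x) = sgn(x)·x². -/
def sq2 (x : ℝ) : ℝ := Real.sign x * x ^ 2

/-- σ⁻¹(y) = sgn(y)·√|y|. -/
def sq2inv (y : ℝ) : ℝ := Real.sign y * Real.sqrt |y|

def h2 : ℝ × ℝ → ℝ × ℝ := fun p => (p.1 + sq2inv p.2, p.2)
def h2inv : ℝ × ℝ → ℝ × ℝ := fun p => (p.1 - sq2inv p.2, p.2)
def v2 : ℝ × ℝ → ℝ × ℝ := fun p => (p.1, p.2 + sq2 p.1)
def v2inv : ℝ × ℝ → ℝ × ℝ := fun p => (p.1, p.2 - sq2 p.1)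

/-- The σ-rational lines for σ(x) = sgn(x)x². -/
def ratLines2 : Set (Set (ℝ × ℝ)) :=
  {{p : ℝ × ℝ | p.2 = 0}, {p : ℝ × ℝ | p.1 = 0}} ∪
  ((fun w : Function.End (ℝ × ℝ) => w '' {p : ℝ × ℝ | p.2 = 0}) ''
    ↑(Submonoid.closure {(h2 : Function.End (ℝ × ℝ)), v2} : Submonoid (Function.End (ℝ × ℝ)))) ∪
  ((fun w : Function.End (ℝ × ℝ) => w '' {p : ℝ × ℝ | p.1 = 0}) ''
    ↑(Submonoid.closure {(h2inv : Function.End (ℝ × ℝ)), v2inv} : Submonoid (Function.End (ℝ × ℝ))))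

namespace Aux


def inQ (F : Subfield ℝ) (r z : ℝ) : Prop := ∃ a b : ℝ, a ∈ F ∧ b ∈ F ∧ z = a + b * r

variable {F : Subfield ℝ} {r : ℝ}

lemma rep_unique (hr : r ∉ F) {a b a' b' : ℝ} (ha : a ∈ F) (hb : b ∈ F) (ha' : a' ∈ F)
    (hb' : b' ∈ F) (h : a + b * r = a' + b' * r) : a = a' ∧ b = b' := by
  by_cases hbb : b = b'
  · exact ⟨by subst hbb; linarith, hbb⟩
  · exfalso
    apply hr
    have hne : b' - b ≠ 0 := by intro h0; apply hbb; linarith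
    have : r = (a - a') / (b' - b) := by
      rw [eq_div_iff hne]; ring_nf; nlinarith [h]
    rw [this]
    exact F.div_mem (F.sub_mem ha ha') (F.sub_mem hb' hb)

def Qext (F : Subfield ℝ) (r : ℝ) (hr2 : r * r ∈ F) (hr : r ∉ F) : Subfield ℝ where
  carrier := {z | inQ F r z}
  zero_mem' := ⟨0, 0, F.zero_mem, F.zero_mem, by ring⟩
  one_mem' := ⟨1, 0, F.one_mem, F.zero_mem, by ring⟩
  add_mem' := by
    rintro x y ⟨a, b, ha, hb, rfl⟩ ⟨c, d, hc, hd, rfl⟩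
    exact ⟨a + c, b + d, F.add_mem ha hc, F.add_mem hb hd, by ring⟩
  neg_mem' := by
    rintro x ⟨a, b, ha, hb, rfl⟩
    exact ⟨-a, -b, F.neg_mem ha, F.neg_mem hb, by ring⟩
  mul_mem' := by
    rintro x y ⟨a, b, ha, hb, rfl⟩ ⟨c, d, hc, hd, rfl⟩
    exact ⟨a * c + b * d * (r * r), a * d + b * c,
      F.add_mem (F.mul_mem ha hc) (F.mul_mem (F.mul_mem hb hd) hr2),
      F.add_mem (F.mul_mem ha hd) (F.mul_mem hb hc), by ring⟩
  inv_mem' := by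
    rintro x ⟨a, b, ha, hb, rfl⟩
    by_cases hx : a + b * r = 0
    · rw [hx]; exact ⟨0, 0, F.zero_mem, F.zero_mem, by norm_num⟩
    · have hN : a * a - b * b * (r * r) ≠ 0 := by
        intro h
        by_cases hb0 : b = 0
        · apply hx; subst hb0; nlinarith [h]
        · apply hr
          have h2 : (r - a/b) * (r + a/b) = 0 := by
            rw [show (r - a/b) * (r + a/b) = r*r - (a/b)*(a/b) from by ring]
            field_simp
            nlinarith [h]
          rcases mul_eq_zero.1 h2 with h3 | h3
          · have : r = a / b := by linarith
            rw [this]; exact F.div_mem ha hb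
          · have : r = -(a / b) := by linarith
            rw [this]; exact F.neg_mem (F.div_mem ha hb)
      set N := a * a - b * b * (r * r) with hNdef
      have key : (a + b * r) * (a / N + (-b / N) * r) = 1 := by
        field_simp
        ring
      refine ⟨a / N, -b / N,
        F.div_mem ha (F.sub_mem (F.mul_mem ha ha) (F.mul_mem (F.mul_mem hb hb) hr2)),
        F.div_mem (F.neg_mem hb) (F.sub_mem (F.mul_mem ha ha) (F.mul_mem (F.mul_mem hb hb) hr2)), ?_⟩
      exact inv_eq_of_mul_eq_one_right key



lemma mem_Qext {F : Subfield ℝ} {r : ℝ} (hr2 : r * r ∈ F) (hr : r ∉ F) (z : ℝ) :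
    z ∈ Qext F r hr2 hr ↔ ∃ a b : ℝ, a ∈ F ∧ b ∈ F ∧ z = a + b * r := Iff.rfl

-- coefficient functions
open Classical in
def cA (F : Subfield ℝ) (r z : ℝ) : ℝ := if h : inQ F r z then h.choose else 0
open Classical in
def cB (F : Subfield ℝ) (r z : ℝ) : ℝ := if h : inQ F r z then h.choose_spec.choose else 0

lemma c_spec {z : ℝ} (h : inQ F r z) :
    cA F r z ∈ F ∧ cB F r z ∈ F ∧ z = cA F r z + cB F r z * r := by
  classical
  rw [cA, cB]
  rw [dif_pos h, dif_pos h]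
  exact ⟨h.choose_spec.choose_spec.1, h.choose_spec.choose_spec.2.1,
    h.choose_spec.choose_spec.2.2⟩

lemma c_eq (hr : r ∉ F) {a b z : ℝ} (ha : a ∈ F) (hb : b ∈ F) (hz : z = a + b * r) :
    cA F r z = a ∧ cB F r z = b := by
  have h : inQ F r z := ⟨a, b, ha, hb, hz⟩
  obtain ⟨h1, h2, h3⟩ := c_spec h
  have := rep_unique hr h1 h2 ha hb (by rw [← h3, ← hz])
  exact this

/-- the conjugation as a bare function -/
def conj (F : Subfield ℝ) (r z : ℝ) : ℝ := cA F r z - cB F r z * r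

lemma conj_eq (hr : r ∉ F) {a b z : ℝ} (ha : a ∈ F) (hb : b ∈ F) (hz : z = a + b * r) :
    conj F r z = a - b * r := by
  obtain ⟨h1, h2⟩ := c_eq hr ha hb hz
  rw [conj, h1, h2]

/-- conjugation ring hom on Qext -/
def conjHom (hr2 : r * r ∈ F) (hr : r ∉ F) : Qext F r hr2 hr →+* ℝ where
  toFun z := conj F r (z : ℝ)
  map_one' := by
    show conj F r ((1 : Qext F r hr2 hr) : ℝ) = 1
    rw [OneMemClass.coe_one, conj_eq hr F.one_mem F.zero_mem (by ring : (1:ℝ) = 1 + 0 * r)]; ring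
  map_zero' := by
    show conj F r ((0 : Qext F r hr2 hr) : ℝ) = 0
    rw [ZeroMemClass.coe_zero, conj_eq hr F.zero_mem F.zero_mem (by ring : (0:ℝ) = 0 + 0 * r)]; ring
  map_mul' := by
    rintro ⟨z, hz⟩ ⟨w, hw⟩
    rw [mem_Qext] at hz hw
    obtain ⟨a, b, ha, hb, rfl⟩ := hz
    obtain ⟨c, d, hc, hd, rfl⟩ := hw
    simp only [MulMemClass.mk_mul_mk]
    rw [conj_eq hr ha hb rfl, conj_eq hr hc hd rfl,
      conj_eq hr (F.add_mem (F.mul_mem ha hc) (F.mul_mem (F.mul_mem hb hd) hr2))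
        (F.add_mem (F.mul_mem ha hd) (F.mul_mem hb hc))
        (by ring : (a + b*r) * (c + d*r) = (a*c + b*d*(r*r)) + (a*d + b*c) * r)]
    ring
  map_add' := by
    rintro ⟨z, hz⟩ ⟨w, hw⟩
    rw [mem_Qext] at hz hw
    obtain ⟨a, b, ha, hb, rfl⟩ := hz
    obtain ⟨c, d, hc, hd, rfl⟩ := hw
    simp only [AddMemClass.mk_add_mk]
    rw [conj_eq hr ha hb rfl, conj_eq hr hc hd rfl,
      conj_eq hr (F.add_mem ha hc) (F.add_mem hb hd)
        (by ring : (a + b*r) + (c + d*r) = (a+c) + (b+d) * r)]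
    ring

lemma conjHom_eq (hr2 : r * r ∈ F) (hr : r ∉ F) {z a b : ℝ} (ha : a ∈ F) (hb : b ∈ F)
    (hzz : z = a + b * r) (hz : z ∈ Qext F r hr2 hr) :
    conjHom hr2 hr ⟨z, hz⟩ = a - b * r := by
  show conj F r _ = _
  exact conj_eq hr ha hb hzz


-- basic sq2 lemmas
lemma sq2_of_pos {x : ℝ} (h : 0 < x) : sq2 x = x ^ 2 := by
  rw [sq2, Real.sign_of_pos h, one_mul]
lemma sq2_of_neg {x : ℝ} (h : x < 0) : sq2 x = -x ^ 2 := by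
  rw [sq2, Real.sign_of_neg h, neg_one_mul]
lemma sq2_zero : sq2 0 = 0 := by simp [sq2]
lemma sq2inv_of_pos {y : ℝ} (h : 0 < y) : sq2inv y = Real.sqrt y := by
  rw [sq2inv, Real.sign_of_pos h, abs_of_pos h, one_mul]
lemma sq2inv_of_neg {y : ℝ} (h : y < 0) : sq2inv y = -Real.sqrt (-y) := by
  rw [sq2inv, Real.sign_of_neg h, abs_of_neg h, neg_one_mul]
lemma sq2inv_zero : sq2inv 0 = 0 := by simp [sq2inv]

/-- The key arithmetic invariant on the open positive quadrant. -/
def QuadInv (x y : ℝ) : Prop :=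
  0 < x ∧ 0 < y ∧ ∃ (F : Subfield ℝ) (σ : F →+* ℝ) (hx : x ∈ F) (hy : y ∈ F),
    σ ⟨y, hy⟩ < (σ ⟨x, hx⟩) ^ 2 ∧
    (y < x ^ 2 → ∀ hs : Real.sqrt y ∈ F, σ ⟨Real.sqrt y, hs⟩ ≤ 0 ∧ 0 ≤ σ ⟨x, hx⟩)

lemma QuadInv.ne_sq {x y : ℝ} (h : QuadInv x y) : y ≠ x ^ 2 := by
  obtain ⟨hx0, hy0, F, σ, hx, hy, hlt, -⟩ := h
  intro hEq
  have h1 : (⟨y, hy⟩ : F) = (⟨x, hx⟩ : F) ^ 2 := by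
    ext
    push_cast
    exact hEq
  rw [h1, map_pow] at hlt
  exact lt_irrefl _ hlt

/-- A-transition: subtracting x² from y when x² < y. -/
lemma QuadInv.stepA {x y : ℝ} (h : QuadInv x y) (hxy : x ^ 2 < y) : QuadInv x (y - x ^ 2) := by
  obtain ⟨hx0, hy0, F, σ, hx, hy, hlt, -⟩ := h
  refine ⟨hx0, by linarith, F, σ, hx, F.sub_mem hy (F.pow_mem hx 2), ?_, ?_⟩
  · have h1 : (⟨y - x ^ 2, F.sub_mem hy (F.pow_mem hx 2)⟩ : F) = ⟨y, hy⟩ - ⟨x, hx⟩ ^ 2 := by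
      ext; push_cast; ring
    rw [h1, map_sub, map_pow]
    nlinarith [sq_nonneg (σ ⟨x, hx⟩)]
  · intro _ hs
    exfalso
    have h2 : (⟨Real.sqrt (y - x^2), hs⟩ : F) ^ 2 = ⟨y - x ^ 2, F.sub_mem hy (F.pow_mem hx 2)⟩ := by
      ext
      push_cast
      exact Real.sq_sqrt (by linarith)
    have h3 : σ (⟨Real.sqrt (y - x^2), hs⟩ : F) ^ 2 = σ ⟨y, hy⟩ - σ ⟨x, hx⟩ ^ 2 := by
      rw [← map_pow, h2]
      have h1 : (⟨y - x ^ 2, F.sub_mem hy (F.pow_mem hx 2)⟩ : F) = ⟨y, hy⟩ - ⟨x, hx⟩ ^ 2 := by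
        ext; push_cast; ring
      rw [h1, map_sub, map_pow]
    nlinarith [sq_nonneg (σ (⟨Real.sqrt (y - x^2), hs⟩ : F))]

/-- B-transition: subtracting √y from x when y < x² and the result stays positive. -/
lemma QuadInv.stepB {x y : ℝ} (h : QuadInv x y) (hxy : y < x ^ 2)
    (hpos : 0 < x - Real.sqrt y) : QuadInv (x - Real.sqrt y) y := by
  obtain ⟨hx0, hy0, F, σ, hx, hy, hlt, hcl⟩ := h
  set r := Real.sqrt y with hrdef
  have hr0 : 0 < r := Real.sqrt_pos.2 hy0
  have hrr : r * r = y := Real.mul_self_sqrt hy0.le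
  by_cases hrF : r ∈ F
  · -- within-field case
    obtain ⟨hσr, hσx⟩ := hcl hxy hrF
    refine ⟨hpos, hy0, F, σ, F.sub_mem hx hrF, hy, ?_, ?_⟩
    · have h1 : (⟨x - r, F.sub_mem hx hrF⟩ : F) = ⟨x, hx⟩ - ⟨r, hrF⟩ := by ext; push_cast; ring
      rw [h1, map_sub]
      nlinarith [hσr, hσx, hlt]
    · intro _ hs
      have hss : (⟨Real.sqrt y, hs⟩ : F) = ⟨r, hrF⟩ := rfl
      refine ⟨hσr, ?_⟩
      have h1 : (⟨x - r, F.sub_mem hx hrF⟩ : F) = ⟨x, hx⟩ - ⟨r, hrF⟩ := by ext; push_cast; ring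
      rw [h1, map_sub]
      linarith
  · -- field-extension case
    have hrrF : r * r ∈ F := by rw [hrr]; exact hy
    have hx' : x - r ∈ Qext F r hrrF hrF :=
      (mem_Qext hrrF hrF _).2 ⟨x, -1, hx, F.neg_mem F.one_mem, by ring⟩
    have hy' : y ∈ Qext F r hrrF hrF :=
      (mem_Qext hrrF hrF _).2 ⟨y, 0, hy, F.zero_mem, by ring⟩
    have e1 : conjHom hrrF hrF ⟨x - r, hx'⟩ = x + r := by
      rw [conjHom_eq hrrF hrF hx (F.neg_mem F.one_mem) (by ring : x - r = x + (-1) * r) hx']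
      ring
    have e2 : conjHom hrrF hrF ⟨y, hy'⟩ = y := by
      rw [conjHom_eq hrrF hrF hy F.zero_mem (by ring : y = y + 0 * r) hy']
      ring
    refine ⟨hpos, hy0, Qext F r hrrF hrF, conjHom hrrF hrF, hx', hy', ?_, ?_⟩
    · rw [e1, e2]
      nlinarith
    · intro _ hs
      have e3 : conjHom hrrF hrF ⟨Real.sqrt y, hs⟩ = -r := by
        rw [conjHom_eq hrrF hrF F.zero_mem F.one_mem (by rw [← hrdef]; ring : Real.sqrt y = 0 + 1 * r) hs]
        ring
      rw [e1, e3]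
      constructor <;> linarith



/-- Global invariant for the backward (h2inv, v2inv) dynamics. -/
def Good (p : ℝ × ℝ) : Prop :=
  (p.1 < 0 ∧ 0 < p.2) ∨ (0 < p.1 ∧ p.2 < 0) ∨ (p.1 = 0 ∧ p.2 ≠ 0) ∨ QuadInv p.1 p.2

lemma Good.snd_ne {p : ℝ × ℝ} (h : Good p) : p.2 ≠ 0 := by
  rcases h with ⟨-, h⟩ | ⟨-, h⟩ | ⟨-, h⟩ | ⟨-, h, -⟩ <;> first | exact ne_of_gt h | exact ne_of_lt h | exact h

lemma good_v2inv {p : ℝ × ℝ} (h : Good p) : Good (v2inv p) := by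
  obtain ⟨x, y⟩ := p
  have hv : v2inv (x, y) = (x, y - sq2 x) := rfl
  rw [hv]
  rcases h with ⟨h1, h2⟩ | ⟨h1, h2⟩ | ⟨h1, h2⟩ | hq
  · left
    rw [sq2_of_neg h1]
    dsimp only at *
    exact ⟨h1, by nlinarith [sq_nonneg x]⟩
  · right; left
    rw [sq2_of_pos h1]
    dsimp only at *
    exact ⟨h1, by nlinarith [sq_nonneg x]⟩
  · right; right; left
    dsimp only at *
    rw [h1, sq2_zero]
    exact ⟨rfl, by simpa using h2⟩
  · have hx0 : 0 < x := hq.1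
    have hy0 : 0 < y := hq.2.1
    rw [sq2_of_pos hx0]
    rcases lt_trichotomy (x ^ 2) y with hlt | heq | hgt
    · right; right; right
      exact hq.stepA hlt
    · exact absurd heq.symm hq.ne_sq
    · right; left
      exact ⟨hx0, by dsimp only; linarith⟩

lemma good_h2inv {p : ℝ × ℝ} (h : Good p) : Good (h2inv p) := by
  obtain ⟨x, y⟩ := p
  have hv : h2inv (x, y) = (x - sq2inv y, y) := rfl
  rw [hv]
  rcases h with ⟨h1, h2⟩ | ⟨h1, h2⟩ | ⟨h1, h2⟩ | hq
  · left
    dsimp only at *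
    rw [sq2inv_of_pos h2]
    have := Real.sqrt_nonneg y
    exact ⟨by linarith, h2⟩
  · right; left
    dsimp only at *
    rw [sq2inv_of_neg h2]
    have := Real.sqrt_nonneg (-y)
    exact ⟨by linarith, h2⟩
  · dsimp only at *
    subst h1
    rcases lt_or_gt_of_ne h2 with hy | hy
    · right; left
      refine ⟨?_, hy⟩
      show 0 < 0 - sq2inv y
      rw [sq2inv_of_neg hy]
      have : 0 < Real.sqrt (-y) := Real.sqrt_pos.2 (by linarith)
      linarith
    · left
      refine ⟨?_, hy⟩
      show 0 - sq2inv y < 0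
      rw [sq2inv_of_pos hy]
      have : 0 < Real.sqrt y := Real.sqrt_pos.2 hy
      linarith
  · have hx0 : 0 < x := hq.1
    have hy0 : 0 < y := hq.2.1
    rw [sq2inv_of_pos hy0]
    rcases lt_trichotomy (x - Real.sqrt y) 0 with hlt | heq | hgt
    · left; exact ⟨hlt, hy0⟩
    · right; right; left; exact ⟨heq, ne_of_gt hy0⟩
    · have hsy : 0 ≤ Real.sqrt y := Real.sqrt_nonneg y
      have hxy : y < x ^ 2 := by
        have hx1 : Real.sqrt y < x := by linarith
        have hx2 : Real.sqrt y ^ 2 = y := Real.sq_sqrt hy0.le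
        nlinarith
      right; right; right
      exact hq.stepB hxy hgt

/-- forward positivity invariant for (h2, v2). -/
def Pos (p : ℝ × ℝ) : Prop := 0 < p.1 ∧ 0 < p.2

lemma pos_h2 {p : ℝ × ℝ} (h : Pos p) : Pos (h2 p) := by
  obtain ⟨x, y⟩ := p
  obtain ⟨ha, hb⟩ := h
  dsimp only at ha hb
  refine ⟨?_, hb⟩
  show 0 < x + sq2inv y
  rw [sq2inv_of_pos hb]
  have := Real.sqrt_nonneg y
  linarith

lemma pos_v2 {p : ℝ × ℝ} (h : Pos p) : Pos (v2 p) := by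
  obtain ⟨x, y⟩ := p
  obtain ⟨ha, hb⟩ := h
  dsimp only at ha hb
  refine ⟨ha, ?_⟩
  show 0 < y + sq2 x
  rw [sq2_of_pos ha]
  nlinarith

lemma initial_quadInv {x y : ℝ} (hx : 0 < x) (hy : 0 < y)
    (hns : ¬ ∃ q : ℚ, (q : ℝ) ^ 2 = y) (hyrat : ∃ q : ℚ, (q : ℝ) = y)
    (hab : ∃ a b : ℚ, a ≠ 0 ∧ 1 ≤ |b| ∧ x = (a : ℝ) + (b : ℝ) * Real.sqrt y)
    (hlt : x ^ 2 < y) : QuadInv x y := by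
  obtain ⟨a, b, -, hb1, hxab⟩ := hab
  obtain ⟨q0, hq0⟩ := hyrat
  set F : Subfield ℝ := (Rat.castHom ℝ).fieldRange with hF
  set r : ℝ := Real.sqrt y with hrdef
  have hr0 : 0 < r := Real.sqrt_pos.2 hy
  have hrr : r * r = y := Real.mul_self_sqrt hy.le
  have hrF : r ∉ F := by
    rintro ⟨q, hq⟩
    refine hns ⟨q, ?_⟩
    have hq' : (q : ℝ) = r := hq
    rw [sq, hq', hrr]
  have hrrF : r * r ∈ F := by rw [hrr, ← hq0]; exact ⟨q0, rfl⟩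
  have haF : (a : ℝ) ∈ F := ⟨a, rfl⟩
  have hbF : (b : ℝ) ∈ F := ⟨b, rfl⟩
  have hxM : x ∈ Qext F r hrrF hrF := (mem_Qext hrrF hrF _).2 ⟨a, b, haF, hbF, hxab⟩
  have hyM : y ∈ Qext F r hrrF hrF := (mem_Qext hrrF hrF _).2 ⟨y, 0, by rw [← hq0]; exact ⟨q0, rfl⟩, F.zero_mem, by ring⟩
  have ex : conjHom hrrF hrF ⟨x, hxM⟩ = (a : ℝ) - (b : ℝ) * r := conjHom_eq hrrF hrF haF hbF hxab hxM
  have ey : conjHom hrrF hrF ⟨y, hyM⟩ = y := by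
    rw [conjHom_eq hrrF hrF (by rw [← hq0]; exact ⟨q0, rfl⟩) F.zero_mem (by ring : y = y + 0 * r) hyM]; ring
  refine ⟨hx, hy, Qext F r hrrF hrF, conjHom hrrF hrF, hxM, hyM, ?_, ?_⟩
  · rw [ex, ey]
    have hb1' : 1 ≤ |(b : ℝ)| := by
      rw [← Rat.cast_abs]
      exact_mod_cast hb1
    have hxr : x < r := by nlinarith
    rcases abs_cases (b : ℝ) with ⟨hb, -⟩ | ⟨hb, -⟩
    · -- b ≥ 1
      have h1b : 1 ≤ (b : ℝ) := by rw [← hb]; exact hb1'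
      have e2 : (a : ℝ) - b * r = x - 2 * b * r := by rw [hxab]; ring
      have h3 : (a : ℝ) - b * r < -r := by nlinarith
      nlinarith [h3, hr0, hrr]
    · -- b ≤ -1
      have h1b : (b : ℝ) ≤ -1 := by nlinarith [hb1', hb]
      have e2 : (a : ℝ) - b * r = x - 2 * b * r := by rw [hxab]; ring
      have h3 : r < (a : ℝ) - b * r := by nlinarith
      nlinarith [h3, hr0, hrr]
  · intro hcon
    exact absurd hcon (by linarith)

open Function in
lemma good_of_word {w : Function.End (ℝ × ℝ)}
    (hw : w ∈ (Submonoid.closure {(h2inv : Function.End (ℝ × ℝ)), v2inv} : Submonoid (Function.End (ℝ × ℝ)))) :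
    ∀ p, Good p → Good (w p) := by
  induction hw using Submonoid.closure_induction with
  | mem f hf =>
    rcases hf with rfl | rfl
    · exact fun p hp => good_h2inv hp
    · exact fun p hp => good_v2inv hp
  | one => intro p hp; exact hp
  | mul f g hf hg ihf ihg =>
    intro p hp
    exact ihf _ (ihg p hp)

lemma pos_of_word {w : Function.End (ℝ × ℝ)}
    (hw : w ∈ (Submonoid.closure {(h2 : Function.End (ℝ × ℝ)), v2} : Submonoid (Function.End (ℝ × ℝ)))) :
    ∀ p, Pos p → Pos (w p) := by
  induction hw using Submonoid.closure_induction with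
  | mem f hf =>
    rcases hf with rfl | rfl
    · exact fun p hp => pos_h2 hp
    · exact fun p hp => pos_v2 hp
  | one => intro p hp; exact hp
  | mul f g hf hg ihf ihg =>
    intro p hp
    exact ihf _ (ihg p hp)

lemma h2inv_h2 (p : ℝ × ℝ) : h2inv (h2 p) = p := by
  obtain ⟨x, y⟩ := p
  show (x + sq2inv y - sq2inv y, y) = (x, y)
  rw [add_sub_cancel_right]

lemma v2inv_v2 (p : ℝ × ℝ) : v2inv (v2 p) = p := by
  obtain ⟨x, y⟩ := p
  show (x, y + sq2 x - sq2 x) = (x, y)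
  rw [add_sub_cancel_right]

lemma h2_h2inv (p : ℝ × ℝ) : h2 (h2inv p) = p := by
  obtain ⟨x, y⟩ := p
  show (x - sq2inv y + sq2inv y, y) = (x, y)
  rw [sub_add_cancel]

lemma v2_v2inv (p : ℝ × ℝ) : v2 (v2inv p) = p := by
  obtain ⟨x, y⟩ := p
  show (x, y - sq2 x + sq2 x) = (x, y)
  rw [sub_add_cancel]

lemma inv_word_fwd {w : Function.End (ℝ × ℝ)}
    (hw : w ∈ (Submonoid.closure {(h2 : Function.End (ℝ × ℝ)), v2} : Submonoid (Function.End (ℝ × ℝ)))) :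
    ∃ w' ∈ (Submonoid.closure {(h2inv : Function.End (ℝ × ℝ)), v2inv} : Submonoid (Function.End (ℝ × ℝ))), ∀ p, w' (w p) = p := by
  induction hw using Submonoid.closure_induction with
  | mem f hf =>
    rcases hf with rfl | rfl
    · exact ⟨h2inv, Submonoid.subset_closure (Set.mem_insert _ _), h2inv_h2⟩
    · exact ⟨v2inv, Submonoid.subset_closure (Set.mem_insert_of_mem _ rfl), v2inv_v2⟩
  | one => exact ⟨1, Submonoid.one_mem _, fun p => rfl⟩
  | mul f g hf hg ihf ihg =>
    obtain ⟨f', hf', hff⟩ := ihf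
    obtain ⟨g', hg', hgg⟩ := ihg
    refine ⟨g' * f', Submonoid.mul_mem _ hg' hf', fun p => ?_⟩
    show g' (f' (f (g p))) = p
    rw [hff (g p), hgg p]

lemma inv_word_bwd {w : Function.End (ℝ × ℝ)}
    (hw : w ∈ (Submonoid.closure {(h2inv : Function.End (ℝ × ℝ)), v2inv} : Submonoid (Function.End (ℝ × ℝ)))) :
    ∃ w' ∈ (Submonoid.closure {(h2 : Function.End (ℝ × ℝ)), v2} : Submonoid (Function.End (ℝ × ℝ))), ∀ p, w' (w p) = p := by
  induction hw using Submonoid.closure_induction with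
  | mem f hf =>
    rcases hf with rfl | rfl
    · exact ⟨h2, Submonoid.subset_closure (Set.mem_insert _ _), h2_h2inv⟩
    · exact ⟨v2, Submonoid.subset_closure (Set.mem_insert_of_mem _ rfl), v2_v2inv⟩
  | one => exact ⟨1, Submonoid.one_mem _, fun p => rfl⟩
  | mul f g hf hg ihf ihg =>
    obtain ⟨f', hf', hff⟩ := ihf
    obtain ⟨g', hg', hgg⟩ := ihg
    refine ⟨g' * f', Submonoid.mul_mem _ hg' hf', fun p => ?_⟩
    show g' (f' (f (g p))) = p
    rw [hff (g p), hgg p]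

end Aux

namespace Aux

lemma main (x₀ y₀ : ℝ) (hx : 0 < x₀) (hy : 0 < y₀)
    (hrat : ∃ q : ℚ, (q : ℝ) = y₀)
    (hns : ¬ ∃ q : ℚ, (q : ℝ) ^ 2 = y₀)
    (hab : ∃ a₀ b₀ : ℚ, a₀ ≠ 0 ∧ 1 ≤ |b₀| ∧ x₀ = (a₀ : ℝ) + (b₀ : ℝ) * Real.sqrt y₀)
    (hlt : x₀ ^ 2 < y₀) :
    ∀ L ∈ ratLines2, (x₀, y₀) ∉ L := by
  intro L hL hmem
  have hG : Good (x₀, y₀) :=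
    Or.inr (Or.inr (Or.inr (initial_quadInv hx hy hns hrat hab hlt)))
  rcases hL with (hL | hL) | hL
  · rcases hL with rfl | hL
    · exact hy.ne' hmem
    · rw [Set.mem_singleton_iff] at hL
      subst hL
      exact hx.ne' hmem
  · obtain ⟨w, hwcl, rfl⟩ := hL
    obtain ⟨p, hp, hwp⟩ := hmem
    obtain ⟨w', hw'cl, hinv⟩ := inv_word_fwd hwcl
    have hGp : Good p := by
      have h1 : w' (w p) = p := hinv p
      have h2 : Good (w' (w p)) := by
        rw [hwp]
        exact good_of_word hw'cl _ hG
      rwa [h1] at h2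
    exact hGp.snd_ne hp
  · obtain ⟨w, hwcl, rfl⟩ := hL
    obtain ⟨p, hp, hwp⟩ := hmem
    obtain ⟨w', hw'cl, hinv⟩ := inv_word_bwd hwcl
    have hPp : Pos p := by
      have h1 : w' (w p) = p := hinv p
      have h2 : Pos (w' (w p)) := by
        rw [hwp]
        exact pos_of_word hw'cl _ ⟨hx, hy⟩
      rwa [h1] at h2
    exact absurd hp (ne_of_gt hPp.1)

end Aux

/-- Points (x₀,y₀) with y₀ rational non-square, x₀ = a₀ + b₀√y₀ (a₀ ≠ 0, |b₀| ≥ 1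
rational) and y₀ > x₀² are σ-irrational; in particular (−1+√2, 2) is σ-irrational. -/
theorem stmt_10 :
    (∀ x₀ y₀ : ℝ, 0 < x₀ → 0 < y₀ →
      (∃ q : ℚ, (q : ℝ) = y₀) →
      (¬ ∃ q : ℚ, (q : ℝ) ^ 2 = y₀) →
      (∃ a₀ b₀ : ℚ, a₀ ≠ 0 ∧ 1 ≤ |b₀| ∧ x₀ = (a₀ : ℝ) + (b₀ : ℝ) * Real.sqrt y₀) →
      x₀ ^ 2 < y₀ →
      ∀ L ∈ ratLines2, (x₀, y₀) ∉ L) ∧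
    (∀ L ∈ ratLines2, ((-1 + Real.sqrt 2, 2) : ℝ × ℝ) ∉ L) := by
  constructor
  · intro x₀ y₀ hx hy hrat hns hab hlt
    exact Aux.main x₀ y₀ hx hy hrat hns hab hlt
  · have h2r : Real.sqrt 2 ^ 2 = 2 := Real.sq_sqrt (by norm_num)
    have h2n : (0:ℝ) ≤ Real.sqrt 2 := Real.sqrt_nonneg 2
    have h1lt : (1:ℝ) < Real.sqrt 2 := by nlinarith
    refine Aux.main _ _ (by linarith) (by norm_num) ⟨2, by norm_num⟩ ?_ ?_ ?_
    · rintro ⟨q, hq⟩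
      apply irrational_sqrt_two
      refine ⟨|q|, ?_⟩
      have h1 : Real.sqrt ((q:ℝ)^2) = |(q:ℝ)| := Real.sqrt_sq_eq_abs _
      rw [hq] at h1
      rw [h1, Rat.cast_abs]
    · exact ⟨-1, 1, by norm_num, by norm_num, by push_cast; ring⟩
    · nlinarith
end
end

section
/- For σ(x) = sgn(x)x², every nonzero point of ℝ² has a dense orbit in ℝ² under the group Γ(σ) generated by h_σ and v_σ. -/
/-!
Let `S` be the closure of the orbit: it is closed and invariant under `Γ`, so it suffices
to show that such a set containing a nonzero point is the whole plane.

If `(x, y) ∈ S` with `x ≠ 0`, a power of `v` moves `c = y / σ x` into `[2, 3)`, and then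
`h⁻¹` multiplies `x` by `1 - √c`, of modulus at most `3 / 4`. Near the `y`-axis the
`v`-orbits have steps `σ x = ±x²`, so `S` contains the `y`-axis, and `h` carries it onto
the half-parabola `y = x², x > 0`. On the half-parabolas `y = r x², x > 0`, the powers of
`v` act by `r ↦ r + m` and those of `h` by `a⁻² ↦ (a + k)⁻²`; the latter maps `[1, ∞)`
onto `[(1 + k)⁻², k⁻²)` with Lipschitz constant `1/4`, so a continued-fraction expansion
shows that every ratio `r` occurs. The left half-plane follows from the symmetry
`(x, y) ↦ (-x, -y)`, which commutes with `h` and `v` because `σ` is odd.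
-/

open Set

noncomputable section

def h2e : Equiv.Perm (ℝ × ℝ) where
  toFun := h2
  invFun := h2inv
  left_inv p := by simp [h2, h2inv]
  right_inv p := by simp [h2, h2inv]

def v2e : Equiv.Perm (ℝ × ℝ) where
  toFun := v2
  invFun := v2inv
  left_inv p := by simp [v2, v2inv]
  right_inv p := by simp [v2, v2inv]

open scoped Pointwise

-- the set `{h2e, v2e}` is spelled out because braces are ambiguous inside a notation
local notation "Γ" => Subgroup.closure (insert h2e (singleton v2e) : Set (Equiv.Perm (ℝ × ℝ)))

lemma sq2_eq_mul_abs (x : ℝ) : sq2 x = x * |x| := by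
  rcases lt_trichotomy x 0 with h | rfl | h
  · rw [sq2, Real.sign_of_neg h, abs_of_neg h]; ring
  · simp [sq2]
  · rw [sq2, Real.sign_of_pos h, abs_of_pos h]; ring

lemma sq2_of_nonneg {x : ℝ} (hx : 0 ≤ x) : sq2 x = x ^ 2 := by
  rw [sq2_eq_mul_abs, abs_of_nonneg hx, sq]

lemma abs_sq2 (x : ℝ) : |sq2 x| = x ^ 2 := by
  rw [sq2_eq_mul_abs, abs_mul, abs_abs, ← sq, sq_abs]

lemma sq2_ne_zero {x : ℝ} (hx : x ≠ 0) : sq2 x ≠ 0 := by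
  rw [sq2_eq_mul_abs]; exact mul_ne_zero hx (abs_ne_zero.mpr hx)

lemma sq2_neg (x : ℝ) : sq2 (-x) = -sq2 x := by
  simp only [sq2_eq_mul_abs, abs_neg, neg_mul]

lemma sq2inv_neg (y : ℝ) : sq2inv (-y) = -sq2inv y := by
  simp only [sq2inv, Real.sign_neg, abs_neg, neg_mul]

lemma sq2_mul (a b : ℝ) : sq2 (a * b) = sq2 a * sq2 b := by
  simp only [sq2_eq_mul_abs, abs_mul]; ring

lemma sq2_sq2inv (y : ℝ) : sq2 (sq2inv y) = y := by
  rcases lt_trichotomy y 0 with h | rfl | h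
  · rw [sq2inv, Real.sign_of_neg h, abs_of_neg h, sq2_eq_mul_abs, neg_one_mul, abs_neg,
      abs_of_nonneg (Real.sqrt_nonneg _), neg_mul, Real.mul_self_sqrt (neg_nonneg.mpr h.le),
      neg_neg]
  · simp [sq2, sq2inv]
  · rw [sq2inv, Real.sign_of_pos h, abs_of_pos h, one_mul, sq2_of_nonneg (Real.sqrt_nonneg y),
      Real.sq_sqrt h.le]

lemma strictMono_sq2 : StrictMono sq2 := by
  intro a b hab
  rw [sq2_eq_mul_abs, sq2_eq_mul_abs]
  rcases le_or_gt 0 a with ha | ha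
  · rw [abs_of_nonneg ha, abs_of_pos (ha.trans_lt hab)]
    nlinarith
  · rw [abs_of_neg ha]
    rcases le_or_gt b 0 with hb | hb
    · rw [abs_of_nonpos hb]; nlinarith
    · rw [abs_of_pos hb]; nlinarith

lemma sq2inv_sq2 (x : ℝ) : sq2inv (sq2 x) = x :=
  strictMono_sq2.injective (sq2_sq2inv _)

lemma sq2inv_mul_sq2 {c : ℝ} (hc : 0 ≤ c) (x : ℝ) : sq2inv (c * sq2 x) = √c * x := by
  rw [← sq2inv_sq2 (√c * x), sq2_mul, sq2_of_nonneg (Real.sqrt_nonneg c), Real.sq_sqrt hc]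

@[fun_prop]
lemma continuous_sq2 : Continuous sq2 := by
  rw [funext sq2_eq_mul_abs]
  fun_prop

@[fun_prop]
lemma continuous_sq2inv : Continuous sq2inv := by
  refine Monotone.continuous_of_surjective (fun a b hab => ?_) fun x => ⟨sq2 x, sq2inv_sq2 x⟩
  rwa [← strictMono_sq2.le_iff_le, sq2_sq2inv, sq2_sq2inv]

lemma h2e_zpow_apply (k : ℤ) (q : ℝ × ℝ) : (h2e ^ k) q = (q.1 + k * sq2inv q.2, q.2) := by
  induction k using Int.induction_on generalizing q with
  | zero => simp
  | succ k ih =>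
    rw [zpow_add_one, Equiv.Perm.mul_apply, ih]
    simp only [h2e, h2, Equiv.coe_fn_mk]
    push_cast; ring_nf
  | pred k ih =>
    rw [zpow_sub_one, Equiv.Perm.mul_apply, ih]
    simp only [h2e, h2inv, Equiv.Perm.inv_def, Equiv.coe_fn_symm_mk]
    push_cast; ring_nf

lemma v2e_zpow_apply (m : ℤ) (q : ℝ × ℝ) : (v2e ^ m) q = (q.1, q.2 + m * sq2 q.1) := by
  induction m using Int.induction_on generalizing q with
  | zero => simp
  | succ m ih =>
    rw [zpow_add_one, Equiv.Perm.mul_apply, ih]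
    simp only [v2e, v2, Equiv.coe_fn_mk]
    push_cast; ring_nf
  | pred m ih =>
    rw [zpow_sub_one, Equiv.Perm.mul_apply, ih]
    simp only [v2e, v2inv, Equiv.Perm.inv_def, Equiv.coe_fn_symm_mk]
    push_cast; ring_nf

lemma continuous_of_mem_Γ {g : Equiv.Perm (ℝ × ℝ)} (hg : g ∈ Γ) : Continuous g := by
  have hh : Continuous h2 := by unfold h2; fun_prop
  have hh' : Continuous h2inv := by unfold h2inv; fun_prop
  have hv : Continuous v2 := by unfold v2; fun_prop
  have hv' : Continuous v2inv := by unfold v2inv; fun_prop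
  suffices Continuous g ∧ Continuous ⇑g⁻¹ from this.1
  induction hg using Subgroup.closure_induction with
  | mem g hg =>
    rcases hg with rfl | rfl
    exacts [⟨hh, hh'⟩, ⟨hv, hv'⟩]
  | one => exact ⟨continuous_id, continuous_id⟩
  | mul g g' _ _ ih ih' =>
    rw [mul_inv_rev, Equiv.Perm.coe_mul, Equiv.Perm.coe_mul]
    exact ⟨ih.1.comp ih'.1, ih'.2.comp ih.2⟩
  | inv g _ ih => exact ⟨ih.2, by simpa using ih.1⟩

lemma map_neg_of_mem_Γ {g : Equiv.Perm (ℝ × ℝ)} (hg : g ∈ Γ) (q : ℝ × ℝ) :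
    g (-q) = -g q := by
  have hneg : Γ ≤ Subgroup.centralizer {Equiv.neg (ℝ × ℝ)} := by
    rw [Subgroup.closure_le]
    rintro g (rfl | rfl) <;> rw [SetLike.mem_coe, Subgroup.mem_centralizer_iff] <;>
      rintro _ rfl <;> ext q <;>
      simp [h2e, v2e, h2, v2, sq2_neg, sq2inv_neg, add_comm]
  have := congrArg (· q) ((Subgroup.mem_centralizer_iff.mp (hneg hg)) _ rfl)
  simpa using this.symm

lemma abs_inv_sq_add_sub_inv_sq_add_le {a b k : ℝ} (ha : 0 < a) (ha1 : a ≤ 1) (hb : 0 < b)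
    (hb1 : b ≤ 1) (hk : 1 ≤ k) :
    |((a + k) ^ 2)⁻¹ - ((b + k) ^ 2)⁻¹| ≤ |(a ^ 2)⁻¹ - (b ^ 2)⁻¹| / 4 := by
  have e1 : ((a + k) ^ 2)⁻¹ - ((b + k) ^ 2)⁻¹
      = (b - a) * ((a + b + 2 * k) / ((a + k) ^ 2 * (b + k) ^ 2)) := by
    field_simp; ring
  have e2 : (a ^ 2)⁻¹ - (b ^ 2)⁻¹ = (b - a) * ((a + b) / (a ^ 2 * b ^ 2)) := by
    field_simp; ring
  rw [e1, e2, abs_mul, abs_mul, abs_of_pos (by positivity : 0 < (a + b) / (a ^ 2 * b ^ 2)),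
    abs_of_pos (by positivity : 0 < (a + b + 2 * k) / ((a + k) ^ 2 * (b + k) ^ 2)), mul_div_assoc]
  refine mul_le_mul_of_nonneg_left ?_ (abs_nonneg _)
  rw [div_div, div_le_div_iff₀ (by positivity) (by positivity)]
  -- `a + k ≥ 2a` and `b + k ≥ 2b` because `a, b ≤ 1 ≤ k`
  have hab : 4 * (a * b) ≤ (a + k) * (b + k) := by nlinarith
  have hsum : (a + b + 2 * k) * (a * b) ≤ (a + b) * ((a + k) * (b + k)) := by
    have : (a + b) * ((a + k) * (b + k)) - (a + b + 2 * k) * (a * b)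
        = k * (a ^ 2 + b ^ 2) + k ^ 2 * (a + b) := by ring
    have : 0 ≤ k * (a ^ 2 + b ^ 2) + k ^ 2 * (a + b) := by positivity
    linarith
  calc (a + b + 2 * k) * (a ^ 2 * b ^ 2 * 4) = (a + b + 2 * k) * (a * b) * (4 * (a * b)) := by ring
    _ ≤ (a + b) * ((a + k) * (b + k)) * ((a + k) * (b + k)) := by gcongr
    _ = (a + b) * ((a + k) ^ 2 * (b + k) ^ 2) := by ring

lemma exists_eq_inv_sq_add {y : ℝ} (h0 : 0 < y) (h1 : y < 1) :
    ∃ a : ℝ, 0 < a ∧ a ≤ 1 ∧ ∃ k : ℕ, 1 ≤ k ∧ y = ((a + k) ^ 2)⁻¹ := by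
  set w := (√y)⁻¹
  have hw : 1 < w :=
    one_lt_inv_iff₀.mpr ⟨Real.sqrt_pos.mpr h0, (Real.sqrt_lt' one_pos).mpr (by rwa [one_pow])⟩
  have hc : 2 ≤ ⌈w⌉₊ := Nat.lt_ceil.mpr (by exact_mod_cast hw)
  refine ⟨w - (⌈w⌉₊ - 1 : ℕ), ?_, ?_, ⌈w⌉₊ - 1, by omega, ?_⟩
  · rw [Nat.cast_sub (by omega)]; push_cast; linarith [Nat.ceil_lt_add_one (by linarith : 0 ≤ w)]
  · rw [Nat.cast_sub (by omega)]; push_cast; linarith [Nat.le_ceil w]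
  · rw [sub_add_cancel, inv_pow, inv_inv, Real.sq_sqrt h0.le]

lemma exists_mem_abs_sub_le_quarter_pow {R : Set ℝ} (h1 : 1 ∈ R)
    (hadd : ∀ r ∈ R, ∀ m : ℤ, r + m ∈ R)
    (hinv : ∀ a : ℝ, 0 < a → (a ^ 2)⁻¹ ∈ R → ∀ k : ℕ, ((a + k) ^ 2)⁻¹ ∈ R) (n : ℕ) (y : ℝ) :
    ∃ p ∈ R, |y - p| ≤ (1 / 4) ^ n := by
  have hint : ∀ m : ℤ, (m : ℝ) ∈ R := fun m => by simpa using hadd 1 h1 (m - 1)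
  induction n generalizing y with
  | zero =>
    refine ⟨⌊y⌋, hint _, ?_⟩
    rw [Int.self_sub_floor, pow_zero, abs_of_nonneg (Int.fract_nonneg y)]
    exact (Int.fract_lt_one y).le
  | succ n ih =>
    rcases (Int.fract_nonneg y).eq_or_lt with h0 | h0
    · exact ⟨⌊y⌋, hint _, by simp [Int.self_sub_floor, ← h0]⟩
    obtain ⟨a, ha0, ha1, k, hk, hy⟩ := exists_eq_inv_sq_add h0 (Int.fract_lt_one y)
    obtain ⟨p, hp, hap⟩ := ih (a ^ 2)⁻¹
    -- the contraction needs a point `≥ 1`, and `max p 1 ∈ R` is no farther from `(a ^ 2)⁻¹ ≥ 1`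
    set b := (√(max p 1))⁻¹
    have hb0 : 0 < b := by positivity
    have hb1 : b ≤ 1 := inv_le_one_of_one_le₀ (Real.one_le_sqrt.mpr (le_max_right p 1))
    have hb : (b ^ 2)⁻¹ = max p 1 := by
      rw [inv_pow, inv_inv, Real.sq_sqrt (zero_le_one.trans (le_max_right p 1))]
    have hbR : (b ^ 2)⁻¹ ∈ R := by
      rw [hb]; rcases max_choice p 1 with h | h <;> rw [h] <;> assumption
    have ha : 1 ≤ (a ^ 2)⁻¹ := one_le_inv₀ (by positivity) |>.mpr (pow_le_one₀ ha0.le ha1)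
    refine ⟨((b + k) ^ 2)⁻¹ + ⌊y⌋, hadd _ (hinv b hb0 hbR k) _, ?_⟩
    calc |y - (((b + k) ^ 2)⁻¹ + ⌊y⌋)| = |((a + k) ^ 2)⁻¹ - ((b + k) ^ 2)⁻¹| := by
          rw [← hy, ← Int.self_sub_floor]; ring_nf
      _ ≤ |(a ^ 2)⁻¹ - (b ^ 2)⁻¹| / 4 :=
          abs_inv_sq_add_sub_inv_sq_add_le ha0 ha1 hb0 hb1 (by exact_mod_cast hk)
      _ ≤ |(a ^ 2)⁻¹ - p| / 4 := by
          have := abs_max_sub_max_le_abs (a ^ 2)⁻¹ p 1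
          rw [max_eq_left ha] at this
          rw [hb]; linarith
      _ ≤ (1 / 4) ^ (n + 1) := by rw [pow_succ (1 / 4 : ℝ) n]; linarith

theorem eq_univ_of_add_int_mem_of_inv_sq_add_nat_mem {R : Set ℝ} (hR : IsClosed R) (h1 : 1 ∈ R)
    (hadd : ∀ r ∈ R, ∀ m : ℤ, r + m ∈ R)
    (hinv : ∀ a : ℝ, 0 < a → (a ^ 2)⁻¹ ∈ R → ∀ k : ℕ, ((a + k) ^ 2)⁻¹ ∈ R) : R = univ := by
  refine eq_univ_of_forall fun y => hR.closure_subset (Metric.mem_closure_iff.mpr fun ε hε => ?_)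
  obtain ⟨n, hn⟩ := exists_pow_lt_of_lt_one hε (by norm_num : (1 / 4 : ℝ) < 1)
  obtain ⟨p, hp, hyp⟩ := exists_mem_abs_sub_le_quarter_pow h1 hadd hinv n y
  exact ⟨p, hp, (Real.dist_eq y p).trans_le hyp |>.trans_lt hn⟩

section InvariantSet

variable {S : Set (ℝ × ℝ)}

lemma h2_zpow_mem (hΓ : ∀ g ∈ Γ, MapsTo g S S) {q : ℝ × ℝ} (hq : q ∈ S) (k : ℤ) :
    (q.1 + k * sq2inv q.2, q.2) ∈ S := by
  rw [← h2e_zpow_apply]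
  exact hΓ _ (zpow_mem (Subgroup.subset_closure (mem_insert _ _)) k) hq

lemma v2_zpow_mem (hΓ : ∀ g ∈ Γ, MapsTo g S S) {q : ℝ × ℝ} (hq : q ∈ S) (m : ℤ) :
    (q.1, q.2 + m * sq2 q.1) ∈ S := by
  rw [← v2e_zpow_apply]
  exact hΓ _ (zpow_mem (Subgroup.subset_closure (mem_insert_of_mem _ (mem_singleton v2e))) m) hq

lemma exists_fst_ne_zero (hΓ : ∀ g ∈ Γ, MapsTo g S S) {p : ℝ × ℝ} (hp : p ∈ S) (hp0 : p ≠ 0) :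
    ∃ q ∈ S, q.1 ≠ 0 := by
  by_cases hx : p.1 = 0
  · refine ⟨_, h2_zpow_mem hΓ hp 1, ?_⟩
    have hy : p.2 ≠ 0 := fun hy => hp0 (Prod.ext hx hy)
    dsimp only
    rw [hx, Int.cast_one, zero_add, one_mul]
    exact fun h => hy (by rw [← sq2_sq2inv p.2, h, sq2_of_nonneg le_rfl, sq, zero_mul])
  · exact ⟨p, hp, hx⟩

lemma exists_fst_ne_zero_abs_le (hΓ : ∀ g ∈ Γ, MapsTo g S S) {q : ℝ × ℝ} (hq : q ∈ S)
    (hq0 : q.1 ≠ 0) : ∃ q' ∈ S, q'.1 ≠ 0 ∧ |q'.1| ≤ 3 / 4 * |q.1| := by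
  obtain ⟨x, y⟩ := q
  have hσ : sq2 x ≠ 0 := sq2_ne_zero hq0
  set c := y / sq2 x - ⌊y / sq2 x⌋ + 2 with hc
  have hc2 : 2 ≤ c := by linarith [Int.floor_le (y / sq2 x)]
  have hc3 : c < 3 := by linarith [Int.lt_floor_add_one (y / sq2 x)]
  have hv := v2_zpow_mem hΓ hq (2 - ⌊y / sq2 x⌋)
  have hy : y + ((2 - ⌊y / sq2 x⌋ : ℤ) : ℝ) * sq2 x = c * sq2 x := by
    rw [hc]; push_cast; field_simp; ring
  rw [hy] at hv
  have hh := h2_zpow_mem hΓ hv (-1)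
  rw [sq2inv_mul_sq2 (by linarith)] at hh
  have hsc1 : 1 < √c := by rw [Real.lt_sqrt zero_le_one]; linarith
  have hsc2 : √c < 7 / 4 := by rw [Real.sqrt_lt' (by norm_num)]; linarith
  have hx : x + ((-1 : ℤ) : ℝ) * (√c * x) = (1 - √c) * x := by push_cast; ring
  rw [hx] at hh
  refine ⟨_, hh, mul_ne_zero (by linarith) hq0, ?_⟩
  rw [abs_mul, abs_of_neg (by linarith : 1 - √c < 0)]
  gcongr
  linarith

lemma exists_fst_ne_zero_abs_lt (hΓ : ∀ g ∈ Γ, MapsTo g S S) {q : ℝ × ℝ} (hq : q ∈ S)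
    (hq0 : q.1 ≠ 0) {δ : ℝ} (hδ : 0 < δ) : ∃ q' ∈ S, q'.1 ≠ 0 ∧ |q'.1| < δ := by
  have key : ∀ n : ℕ, ∃ q' ∈ S, q'.1 ≠ 0 ∧ |q'.1| ≤ (3 / 4) ^ n * |q.1| := by
    intro n
    induction n with
    | zero => exact ⟨q, hq, hq0, by rw [pow_zero, one_mul]⟩
    | succ n ih =>
      obtain ⟨q', hq', hq'0, hle⟩ := ih
      obtain ⟨q'', hq'', hq''0, hle'⟩ := exists_fst_ne_zero_abs_le hΓ hq' hq'0
      exact ⟨q'', hq'', hq''0, by rw [pow_succ]; nlinarith⟩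
  have hx := abs_pos.mpr hq0
  obtain ⟨n, hn⟩ := exists_pow_lt_of_lt_one (div_pos hδ hx) (by norm_num : (3 / 4 : ℝ) < 1)
  obtain ⟨q', hq', hq'0, hle⟩ := key n
  exact ⟨q', hq', hq'0, hle.trans_lt ((lt_div_iff₀ hx).mp hn)⟩

lemma exists_int_abs_add_int_mul_sub_lt {d : ℝ} (hd : d ≠ 0) (c b : ℝ) :
    ∃ m : ℤ, |c + m * d - b| < |d| := by
  refine ⟨⌊(b - c) / d⌋, ?_⟩
  have : c + ⌊(b - c) / d⌋ * d - b = -(Int.fract ((b - c) / d) * d) := by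
    rw [Int.fract]; field_simp; ring
  rw [this, abs_neg, abs_mul, abs_of_nonneg (Int.fract_nonneg _)]
  exact mul_lt_of_lt_one_left (abs_pos.mpr hd) (Int.fract_lt_one _)

lemma mk_zero_mem (hS : IsClosed S) (hΓ : ∀ g ∈ Γ, MapsTo g S S) {q : ℝ × ℝ} (hq : q ∈ S)
    (hq0 : q.1 ≠ 0) (b : ℝ) : ((0 : ℝ), b) ∈ S := by
  rw [← hS.closure_eq, Metric.mem_closure_iff]
  intro ε hε
  obtain ⟨⟨ξ, H⟩, hmem, hξ0, hξ⟩ := exists_fst_ne_zero_abs_lt hΓ hq hq0 (lt_min hε one_pos)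
  obtain ⟨m, hm⟩ := exists_int_abs_add_int_mul_sub_lt (sq2_ne_zero hξ0) H b
  refine ⟨_, v2_zpow_mem hΓ hmem m, ?_⟩
  have hξ1 : |ξ| < 1 := hξ.trans_le (min_le_right _ _)
  have hξε : |ξ| < ε := hξ.trans_le (min_le_left _ _)
  have hsq : ξ ^ 2 ≤ |ξ| := by
    rw [← sq_abs, sq]; exact mul_le_of_le_one_left (abs_nonneg ξ) hξ1.le
  rw [Prod.dist_eq, Real.dist_eq, Real.dist_eq, zero_sub, abs_neg, abs_sub_comm, max_lt_iff]
  exact ⟨hξε, hm.trans_le ((abs_sq2 ξ).trans_le hsq) |>.trans hξε⟩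

lemma mk_mem_of_pos (hS : IsClosed S) (hΓ : ∀ g ∈ Γ, MapsTo g S S)
    (haxis : ∀ b : ℝ, ((0 : ℝ), b) ∈ S) {t : ℝ} (ht : 0 < t) (y : ℝ) : (t, y) ∈ S := by
  set R : Set ℝ := {r | ∀ t : ℝ, 0 < t → (t, r * t ^ 2) ∈ S}
  have hR : IsClosed R := by
    simp only [R, ofPred_forall]
    exact isClosed_iInter fun t => isClosed_iInter fun _ => hS.preimage (by fun_prop)
  have h1 : 1 ∈ R := fun t ht => by
    have := h2_zpow_mem hΓ (haxis (t ^ 2)) 1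
    rwa [← sq2_of_nonneg ht.le, sq2inv_sq2, Int.cast_one, one_mul, zero_add, ← one_mul (sq2 t),
      sq2_of_nonneg ht.le] at this
  have hadd : ∀ r ∈ R, ∀ m : ℤ, r + m ∈ R := fun r hr m t ht => by
    have := v2_zpow_mem hΓ (hr t ht) m
    rwa [sq2_of_nonneg ht.le, ← add_mul] at this
  have hinv : ∀ a : ℝ, 0 < a → (a ^ 2)⁻¹ ∈ R → ∀ k : ℕ, ((a + k) ^ 2)⁻¹ ∈ R :=
    fun a ha hr k t ht => by
      have hs : 0 < t * a / (a + k) := by positivity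
      have := h2_zpow_mem hΓ (hr _ hs) k
      have e : (a ^ 2)⁻¹ * (t * a / (a + k)) ^ 2 = sq2 (t / (a + k)) := by
        rw [sq2_of_nonneg (by positivity)]; field_simp
      rw [e, sq2inv_sq2, sq2_of_nonneg (by positivity)] at this
      convert this using 2 <;> push_cast <;> field_simp
  have hy : y / t ^ 2 ∈ R := by
    rw [eq_univ_of_add_int_mem_of_inv_sq_add_nat_mem hR h1 hadd hinv]; trivial
  simpa [div_mul_cancel₀ _ (pow_ne_zero 2 ht.ne')] using hy t ht

lemma mapsTo_neg (hΓ : ∀ g ∈ Γ, MapsTo g S S) : ∀ g ∈ Γ, MapsTo g (-S) (-S) :=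
  fun g hg q hq => by
    rw [mem_neg, ← map_neg_of_mem_Γ hg]
    exact hΓ g hg hq

theorem eq_univ_of_mem_of_ne_zero (hS : IsClosed S) (hΓ : ∀ g ∈ Γ, MapsTo g S S) {p : ℝ × ℝ}
    (hp : p ∈ S) (hp0 : p ≠ 0) : S = univ := by
  obtain ⟨q, hq, hq0⟩ := exists_fst_ne_zero hΓ hp hp0
  have haxis : ∀ b : ℝ, ((0 : ℝ), b) ∈ S := mk_zero_mem hS hΓ hq hq0
  have hleft : ∀ t : ℝ, 0 < t → ∀ y, (t, y) ∈ -S :=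
    fun t => mk_mem_of_pos hS.neg (mapsTo_neg hΓ) (fun b => by simpa using haxis (-b))
  refine eq_univ_of_forall fun ⟨x, y⟩ => ?_
  rcases lt_trichotomy x 0 with hx | rfl | hx
  · simpa using hleft (-x) (neg_pos.mpr hx) (-y)
  · exact haxis y
  · exact mk_mem_of_pos hS hΓ haxis hx y

end InvariantSet

/-- For σ(x) = sgn(x)x², every nonzero point of the plane has a dense orbit
under the group generated by h_σ and v_σ. -/
theorem stmt_11 (p : ℝ × ℝ) (hp : p ≠ 0) :
    Dense {q : ℝ × ℝ | ∃ g ∈ (Subgroup.closure {h2e, v2e} : Subgroup (Equiv.Perm (ℝ × ℝ))),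
      g p = q} := by
  set O := {q : ℝ × ℝ | ∃ g ∈ Γ, g p = q}
  have hO : ∀ g ∈ Γ, MapsTo g O O := fun g hg _ ⟨g', hg', hq⟩ =>
    ⟨g * g', mul_mem hg hg', by rw [Equiv.Perm.mul_apply, hq]⟩
  have hΓ : ∀ g ∈ Γ, MapsTo g (closure O) (closure O) := fun g hg =>
    (hO g hg).closure (continuous_of_mem_Γ hg)
  exact dense_iff_closure_eq.mpr
    (eq_univ_of_mem_of_ne_zero isClosed_closure hΓ (subset_closure ⟨1, one_mem _, rfl⟩) hp)
end
end
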